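/- arXiv:1904.11526 — 3 statements merged into one kernel-verified Lean document; each statement's English description precedes it below -/
import Mathlib

section
/- Let W, W̃ ∈ C^{α,β₁}([0,T]×V;V), and let (Y,Ẏ) ∈ 𝓔_W^{2α} and (Ỹ,Ỹ') ∈ 𝓔_{W̃}^{2α} be controlled rough paths. Then the α-Hölder seminorm of Y−Ỹ satisfies: ‖Y−Ỹ‖_α ≤ (1+‖Ẏ‖_∞)^{β₀}·‖W−W̃‖_{α,β₁} + ‖W̃‖_{α,β₁}·(1+‖Ẏ‖_∞+‖Ỹ'‖_∞)^{β₁}·‖Ẏ₀−Ỹ'₀‖_V + T^α·(1+‖W̃‖_{α,β₁})·(1+‖Ẏ‖_∞+‖Ỹ'‖_∞)^{β₁}·d_{α,W,W̃}((Y,Ẏ),(Ỹ,Ỹ')), where ‖·‖_∞ is the supremum norm on [0,T]. -/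
open Set

/-- Lemma 3.2: comparison of two nonlinear controlled rough paths `(Y, Ẏ) ∈ 𝓔_W^{2α}`,
`(Ỹ, Ỹ') ∈ 𝓔_{W̃}^{2α}` (here `Yd = Ẏ`, `Yt = Ỹ`, `Ytd = Ỹ'`, `Wt = W̃`).
`NWd` bounds the pieces of `‖W - W̃‖_{α,β₁}`, `NWt` those of `‖W̃‖_{α,β₁}`,
`MYd, MYtd` bound `‖Ẏ‖_∞, ‖Ỹ'‖_∞`, and `DG + DR` bounds the distance
`d_{α,W,W̃}((Y,Ẏ),(Ỹ,Ỹ')) = ‖Ẏ-Ỹ'‖_α + ‖R^Y-R^Ỹ‖_{2α}`.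
The conclusion is the α-Hölder bound (3.18) on `Y - Ỹ`. -/
theorem stmt_4 {V : Type*} [NormedAddCommGroup V] [NormedSpace ℝ V]
    (T α β₀ β₁ : ℝ) (hT : 0 < T) (hα1 : 1 / 3 < α) (hα2 : α ≤ 1 / 2)
    (hβ₀ : 0 ≤ β₀) (hβ₁ : 0 ≤ β₁)
    (W Wt : ℝ → V → V) (Y Yd Yt Ytd : ℝ → V)
    (NWd NWt MYd MYtd DG DR : ℝ)
    (hWtsm : ∀ t ∈ Icc (0 : ℝ) T, Differentiable ℝ (Wt t))
    (hWd0 : ∀ s ∈ Icc (0 : ℝ) T, ∀ t ∈ Icc (0 : ℝ) T, ∀ x : V,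
      ‖(W t x - Wt t x) - (W s x - Wt s x)‖ ≤ NWd * |t - s| ^ α * (1 + ‖x‖) ^ β₀)
    (hWd1 : ∀ s ∈ Icc (0 : ℝ) T, ∀ t ∈ Icc (0 : ℝ) T, ∀ x : V,
      ‖fderiv ℝ (fun z => (W t z - Wt t z) - (W s z - Wt s z)) x‖
        ≤ NWd * |t - s| ^ α * (1 + ‖x‖) ^ β₁)
    (hWt0 : ∀ s ∈ Icc (0 : ℝ) T, ∀ t ∈ Icc (0 : ℝ) T, ∀ x : V,
      ‖Wt t x - Wt s x‖ ≤ NWt * |t - s| ^ α * (1 + ‖x‖) ^ β₀)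
    (hWt1 : ∀ s ∈ Icc (0 : ℝ) T, ∀ t ∈ Icc (0 : ℝ) T, ∀ x : V,
      ‖fderiv ℝ (fun z => Wt t z - Wt s z) x‖ ≤ NWt * |t - s| ^ α * (1 + ‖x‖) ^ β₁)
    (hMYd : ∀ t ∈ Icc (0 : ℝ) T, ‖Yd t‖ ≤ MYd)
    (hMYtd : ∀ t ∈ Icc (0 : ℝ) T, ‖Ytd t‖ ≤ MYtd)
    (hG : ∀ s ∈ Icc (0 : ℝ) T, ∀ t ∈ Icc (0 : ℝ) T,
      ‖(Yd t - Ytd t) - (Yd s - Ytd s)‖ ≤ DG * |t - s| ^ α)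
    (hR : ∀ s ∈ Icc (0 : ℝ) T, ∀ t ∈ Icc (0 : ℝ) T,
      ‖(Y t - Y s - (W t (Yd s) - W s (Yd s)))
          - (Yt t - Yt s - (Wt t (Ytd s) - Wt s (Ytd s)))‖ ≤ DR * |t - s| ^ (2 * α)) :
    ∀ s ∈ Icc (0 : ℝ) T, ∀ t ∈ Icc (0 : ℝ) T,
      ‖(Y t - Yt t) - (Y s - Yt s)‖
        ≤ ((1 + MYd) ^ β₀ * NWd
            + NWt * (1 + MYd + MYtd) ^ β₁ * ‖Yd 0 - Ytd 0‖
            + T ^ α * (1 + NWt) * (1 + MYd + MYtd) ^ β₁ * (DG + DR)) * |t - s| ^ α := by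
  intro s hs t ht
  have hα0 : (0:ℝ) < α := by linarith
  have h0T : (0:ℝ) ∈ Icc (0:ℝ) T := ⟨le_refl 0, hT.le⟩
  have hTT : T ∈ Icc (0:ℝ) T := ⟨hT.le, le_refl T⟩
  have hTα : (0:ℝ) < T ^ α := Real.rpow_pos_of_pos hT α
  have hMYd0 : 0 ≤ MYd := (norm_nonneg _).trans (hMYd 0 h0T)
  have hMYtd0 : 0 ≤ MYtd := (norm_nonneg _).trans (hMYtd 0 h0T)
  have hDG0 : 0 ≤ DG := by
    have h := (norm_nonneg _).trans (hG 0 h0T T hTT)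
    rw [sub_zero, abs_of_pos hT] at h
    nlinarith [hTα]
  have hDR0 : 0 ≤ DR := by
    have h := (norm_nonneg _).trans (hR 0 h0T T hTT)
    rw [sub_zero, abs_of_pos hT] at h
    nlinarith [Real.rpow_pos_of_pos hT (2 * α)]
  have hNWd0 : 0 ≤ NWd := by
    have h := (norm_nonneg _).trans (hWd0 0 h0T T hTT 0)
    rw [sub_zero, abs_of_pos hT, norm_zero, add_zero, Real.one_rpow, mul_one] at h
    nlinarith [hTα]
  have hNWt0 : 0 ≤ NWt := by
    have h := (norm_nonneg _).trans (hWt0 0 h0T T hTT 0)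
    rw [sub_zero, abs_of_pos hT, norm_zero, add_zero, Real.one_rpow, mul_one] at h
    nlinarith [hTα]
  have hcnn : 0 ≤ |t - s| ^ α := Real.rpow_nonneg (abs_nonneg _) α
  have habsT : |t - s| ≤ T := by
    rw [abs_sub_le_iff]
    constructor <;> [linarith [ht.2, hs.1]; linarith [hs.2, ht.1]]
  have hcT : |t - s| ^ α ≤ T ^ α := Real.rpow_le_rpow (abs_nonneg _) habsT hα0.le
  have hP0 : (0:ℝ) ≤ (1 + MYd + MYtd) ^ β₁ := Real.rpow_nonneg (by linarith) β₁
  have hP1 : (1:ℝ) ≤ (1 + MYd + MYtd) ^ β₁ := by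
    calc (1:ℝ) = 1 ^ β₁ := (Real.one_rpow β₁).symm
    _ ≤ (1 + MYd + MYtd) ^ β₁ := Real.rpow_le_rpow zero_le_one (by linarith) hβ₁
  -- bound A (remainder difference)
  have hA : ‖(Y t - Y s - (W t (Yd s) - W s (Yd s)))
      - (Yt t - Yt s - (Wt t (Ytd s) - Wt s (Ytd s)))‖ ≤ DR * (T ^ α * |t - s| ^ α) := by
    refine (hR s hs t ht).trans ?_
    have h2 : |t - s| ^ (2 * α) ≤ T ^ α * |t - s| ^ α := by
      rw [two_mul, Real.rpow_add' (abs_nonneg _) (by linarith)]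
      exact mul_le_mul_of_nonneg_right hcT hcnn
    exact mul_le_mul_of_nonneg_left h2 hDR0
  -- bound B (difference of W and Wt)
  have hB : ‖(W t (Yd s) - Wt t (Yd s)) - (W s (Yd s) - Wt s (Yd s))‖
      ≤ NWd * |t - s| ^ α * (1 + MYd) ^ β₀ := by
    refine (hWd0 s hs t ht (Yd s)).trans ?_
    exact mul_le_mul_of_nonneg_left
      (Real.rpow_le_rpow (by positivity) (by linarith [hMYd s hs]) hβ₀)
      (mul_nonneg hNWd0 hcnn)
  -- bound C (mean value for Wt)
  have hC : ‖(Wt t (Yd s) - Wt s (Yd s)) - (Wt t (Ytd s) - Wt s (Ytd s))‖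
      ≤ NWt * |t - s| ^ α * (1 + MYd + MYtd) ^ β₁ * ‖Yd s - Ytd s‖ := by
    have hconv : Convex ℝ (Metric.closedBall (0:V) (MYd + MYtd)) :=
      convex_closedBall _ _
    have hdf : Differentiable ℝ (fun z => Wt t z - Wt s z) :=
      (hWtsm t ht).sub (hWtsm s hs)
    have hb : ∀ x ∈ Metric.closedBall (0:V) (MYd + MYtd),
        ‖fderiv ℝ (fun z => Wt t z - Wt s z) x‖
          ≤ NWt * |t - s| ^ α * (1 + MYd + MYtd) ^ β₁ := by
      intro x hx
      refine (hWt1 s hs t ht x).trans ?_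
      have hx' : ‖x‖ ≤ MYd + MYtd := by
        simpa [Metric.mem_closedBall, dist_zero_right] using hx
      exact mul_le_mul_of_nonneg_left
        (Real.rpow_le_rpow (by positivity) (by linarith) hβ₁)
        (mul_nonneg hNWt0 hcnn)
    have hm1 : Ytd s ∈ Metric.closedBall (0:V) (MYd + MYtd) := by
      simp only [Metric.mem_closedBall, dist_zero_right]
      linarith [hMYtd s hs]
    have hm2 : Yd s ∈ Metric.closedBall (0:V) (MYd + MYtd) := by
      simp only [Metric.mem_closedBall, dist_zero_right]
      linarith [hMYd s hs]
    exact hconv.norm_image_sub_le_of_norm_fderiv_le (fun x _ => hdf x) hb hm1 hm2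
  -- bound on ‖Yd s - Ytd s‖
  have hYdY : ‖Yd s - Ytd s‖ ≤ ‖Yd 0 - Ytd 0‖ + DG * T ^ α := by
    have h := hG 0 h0T s hs
    rw [sub_zero] at h
    have hsT : |s| ^ α ≤ T ^ α :=
      Real.rpow_le_rpow (abs_nonneg _) (by rw [abs_of_nonneg hs.1]; exact hs.2) hα0.le
    have htri : ‖Yd s - Ytd s‖ ≤ ‖(Yd s - Ytd s) - (Yd 0 - Ytd 0)‖ + ‖Yd 0 - Ytd 0‖ := by
      have := norm_add_le ((Yd s - Ytd s) - (Yd 0 - Ytd 0)) (Yd 0 - Ytd 0)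
      simpa using this
    have : DG * |s| ^ α ≤ DG * T ^ α := mul_le_mul_of_nonneg_left hsT hDG0
    linarith
  -- decomposition
  have hsplit : (Y t - Yt t) - (Y s - Yt s) =
      ((Y t - Y s - (W t (Yd s) - W s (Yd s)))
        - (Yt t - Yt s - (Wt t (Ytd s) - Wt s (Ytd s))))
      + ((W t (Yd s) - Wt t (Yd s)) - (W s (Yd s) - Wt s (Yd s)))
      + ((Wt t (Yd s) - Wt s (Yd s)) - (Wt t (Ytd s) - Wt s (Ytd s))) := by abel
  have hCnn : 0 ≤ NWt * |t - s| ^ α * (1 + MYd + MYtd) ^ β₁ :=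
    mul_nonneg (mul_nonneg hNWt0 hcnn) hP0
  have hC' : ‖(Wt t (Yd s) - Wt s (Yd s)) - (Wt t (Ytd s) - Wt s (Ytd s))‖
      ≤ NWt * |t - s| ^ α * (1 + MYd + MYtd) ^ β₁ * (‖Yd 0 - Ytd 0‖ + DG * T ^ α) :=
    hC.trans (mul_le_mul_of_nonneg_left hYdY hCnn)
  have hZ : 0 ≤ ‖Yd 0 - Ytd 0‖ := norm_nonneg _
  have hnorm : ‖(Y t - Yt t) - (Y s - Yt s)‖
      ≤ DR * (T ^ α * |t - s| ^ α) + NWd * |t - s| ^ α * (1 + MYd) ^ β₀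
        + NWt * |t - s| ^ α * (1 + MYd + MYtd) ^ β₁ * (‖Yd 0 - Ytd 0‖ + DG * T ^ α) := by
    rw [hsplit]
    calc ‖_ + _ + _‖ ≤ ‖_‖ + ‖_‖ + ‖_‖ := norm_add₃_le
    _ ≤ _ := add_le_add (add_le_add hA hB) hC'
  refine hnorm.trans ?_
  have hQ : (0:ℝ) ≤ (1 + MYd) ^ β₀ := Real.rpow_nonneg (by linarith) β₀
  have e1 : 0 ≤ |t - s| ^ α * T ^ α * ((1 + MYd + MYtd) ^ β₁ * DG) := by
    have := mul_nonneg (mul_nonneg hcnn hTα.le) (mul_nonneg hP0 hDG0); linarith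
  have e2 : 0 ≤ |t - s| ^ α * T ^ α * (((1 + MYd + MYtd) ^ β₁ - 1) * DR) :=
    mul_nonneg (mul_nonneg hcnn hTα.le) (mul_nonneg (by linarith) hDR0)
  have e3 : 0 ≤ |t - s| ^ α * T ^ α * (NWt * (1 + MYd + MYtd) ^ β₁ * DR) :=
    mul_nonneg (mul_nonneg hcnn hTα.le) (mul_nonneg (mul_nonneg hNWt0 hP0) hDR0)
  nlinarith [e1, e2, e3]
end

section
/- Let (W,𝕎) be an α-Hölder nonlinear rough path with growth index β₂ = (β₀,β₁,β₂), let (Y,Ẏ) ∈ 𝓔_W^{2α}, and let Z_t := ∫_0^t W(dr,Y_r) be the nonlinear rough integral. Then Z is controlled by W with Gubinelli derivative Y, i.e. (Z,Y) ∈ 𝓔_W^{2α}; moreover the remainder R^Z_{s,t} := Z_t − Z_s − W_{s,t}(Y_s) satisfies ‖R^Z‖_{2α} ≤ k_α·‖(W,𝕎)‖_𝒞·(1+2‖Ẏ‖_∞)^{max(β₀,β₁)}·(1+2‖Y‖_∞)^{max(β₁,β₂)}·[1 + T^α·(‖Y‖_α+‖Ẏ‖_α+‖R^Y‖_{2α})],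 where k_α = (1−2^{1−3α})^{−1}. -/
/-!
The increments `Z t - Z s` are limits of Riemann sums of the germ
`W_{a,b}(Y_a) + 𝕎_{a,b}(Ẏ_a, Y_a)`, hence also of the sums of the germ
`Ξ_{a,b} = W_{a,b}(Y_a) + 𝕎_{a,b}(Ẏ_a, (Y_a + Y_{(a+b)/2}) / 2)`, which differs from it by
`O(|b - a| ^ 3α)` with `3α > 1`. Sewing `Ξ` along dyadic partitions gives
`‖Z_t - Z_s - Ξ_{s,t}‖ ≤ k_α C |t - s| ^ 3α` once the midpoint defect satisfies
`‖Ξ_{a,b} - Ξ_{a,m} - Ξ_{m,b}‖ ≤ C |b - a| ^ 3α`. By Chen's relation this defect is a Taylor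
remainder of `W_{m,b}` between `Y_a` and `Y_m`, centred at their midpoint, plus two increments of
`𝕎` in its arguments. The Taylor remainder is bounded through the derivative of `𝕎` instead of
`D²W`, which keeps the estimate linear in `‖Y‖_α`, `‖Ẏ‖_α`, `‖R^Y‖_{2α}`, and the centring makes
the numerical constants fit (using `2 ^ (-α) ≤ 4/5`). Finally `Ξ_{s,t} - W_{s,t}(Y_s)` is a single
`𝕎` term, of order `|t - s| ^ 2α`.
-/

open Set

/-- A partition `s = t₀ < t₁ < ⋯ < t_n = t` of the interval `[s,t]`. -/
structure TimePartition (s t : ℝ) where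
  n : ℕ
  pts : ℕ → ℝ
  first : pts 0 = s
  last : pts n = t
  mono : ∀ k < n, pts k < pts (k + 1)

variable {V : Type*} [NormedAddCommGroup V] [NormedSpace ℝ V]

/-- The compensated Riemann–Stieltjes sum
`∑ₖ [W_{t_{k-1},t_k}(Y_{t_{k-1}}) + 𝕎_{t_{k-1},t_k}(Ẏ_{t_{k-1}}, Y_{t_{k-1}})]`. -/
def riemannSum (W : ℝ → V → V) (WW : ℝ → ℝ → V × V → V) (Y Yd : ℝ → V)
    {s t : ℝ} (P : TimePartition s t) : V :=
  ∑ k ∈ Finset.range P.n,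
    ((W (P.pts (k + 1)) (Y (P.pts k)) - W (P.pts k) (Y (P.pts k)))
      + WW (P.pts k) (P.pts (k + 1)) (Yd (P.pts k), Y (P.pts k)))

/-- `(W, 𝕎)` is an α-Hölder nonlinear rough path with growth index `β₂ = (β 0, β 1, β 2)`. -/
def RoughPath2 (T α : ℝ) (β : ℕ → ℝ) (W : ℝ → V → V) (WW : ℝ → ℝ → V × V → V)
    (NW NWW : ℝ) : Prop :=
  (∀ t ∈ Icc (0 : ℝ) T, ContDiff ℝ 2 (W t)) ∧
  (∀ k ≤ 2, ∀ s ∈ Icc (0 : ℝ) T, ∀ t ∈ Icc (0 : ℝ) T, ∀ x : V,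
    ‖iteratedFDeriv ℝ k (fun z => W t z - W s z) x‖
      ≤ NW * |t - s| ^ α * (1 + ‖x‖) ^ (β k)) ∧
  (∀ s ∈ Icc (0 : ℝ) T, ∀ t ∈ Icc (0 : ℝ) T, ContDiff ℝ 1 (WW s t)) ∧
  (∀ s ∈ Icc (0 : ℝ) T, ∀ t ∈ Icc (0 : ℝ) T, ∀ x y : V,
    ‖WW s t (x, y)‖ ≤ NWW * |t - s| ^ (2 * α) * (1 + ‖x‖) ^ (β 0) * (1 + ‖y‖) ^ (β 1)) ∧
  (∀ s ∈ Icc (0 : ℝ) T, ∀ t ∈ Icc (0 : ℝ) T, ∀ x y : V,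
    ‖fderiv ℝ (WW s t) (x, y)‖
      ≤ NWW * |t - s| ^ (2 * α) * (1 + ‖x‖) ^ (max (β 0) (β 1))
          * (1 + ‖y‖) ^ (max (β 1) (β 2))) ∧
  (∀ s ∈ Icc (0 : ℝ) T, ∀ u ∈ Icc (0 : ℝ) T, ∀ t ∈ Icc (0 : ℝ) T, ∀ x y : V,
    WW s t (x, y) - WW s u (x, y) - WW u t (x, y)
      = fderiv ℝ (fun z => W t z - W u z) y (W u x - W s x))

open Finset Filter Topology

section MeanValue

variable {E F G : Type*} [NormedAddCommGroup E] [NormedSpace ℝ E]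
  [NormedAddCommGroup F] [NormedSpace ℝ F] [NormedAddCommGroup G] [NormedSpace ℝ G]

theorem norm_sub_le_of_norm_deriv_le_abs_sub_half {f f' : ℝ → E} {L c : ℝ}
    (hf : ∀ θ ∈ Icc (0 : ℝ) 1, HasDerivAt f (f' θ) θ)
    (hbound : ∀ θ ∈ Icc (0 : ℝ) 1, ‖f' θ‖ ≤ L * |θ - 1 / 2| + c) :
    ‖f 1 - f 0‖ ≤ L / 4 + c := by
  have hcont : ContinuousOn f (Icc 0 1) := fun θ hθ => (hf θ hθ).continuousAt.continuousWithinAt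
  have hleft : ‖f (1 / 2) - f 0‖ ≤ L / 8 + c / 2 := by
    have := image_norm_le_of_norm_deriv_right_le_deriv_boundary (a := 0) (b := 1 / 2)
      (f := fun θ => f θ - f 0) (B := fun θ => L * (θ - θ ^ 2) / 2 + c * θ)
      (B' := fun θ => L * (1 / 2 - θ) + c)
      ((hcont.mono (Icc_subset_Icc le_rfl (by norm_num))).sub continuousOn_const)
      (fun θ hθ => ((hf θ ⟨hθ.1, by linarith [hθ.2]⟩).sub_const _).hasDerivWithinAt)
      (by simp)
      (fun θ => ((((hasDerivAt_id' θ).sub (hasDerivAt_pow 2 θ)).const_mul L).div_const 2).add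
          ((hasDerivAt_id' θ).const_mul c) |>.congr_deriv (by push_cast; ring))
      (fun θ hθ => by
        have := hbound θ ⟨hθ.1, by linarith [hθ.2]⟩
        rwa [abs_of_neg (by linarith [hθ.2]), neg_sub] at this)
      (right_mem_Icc.2 (by norm_num))
    convert this using 1; ring
  have hright : ‖f 1 - f (1 / 2)‖ ≤ L / 8 + c / 2 := by
    have := image_norm_le_of_norm_deriv_right_le_deriv_boundary (a := 1 / 2) (b := 1)
      (f := fun θ => f θ - f (1 / 2))
      (B := fun θ => L * (θ ^ 2 - θ + 1 / 4) / 2 + c * (θ - 1 / 2))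
      (B' := fun θ => L * (θ - 1 / 2) + c)
      ((hcont.mono (Icc_subset_Icc (by norm_num) le_rfl)).sub continuousOn_const)
      (fun θ hθ => ((hf θ ⟨by linarith [hθ.1], hθ.2.le⟩).sub_const _).hasDerivWithinAt)
      (by norm_num)
      (fun θ => (((((hasDerivAt_pow 2 θ).sub (hasDerivAt_id' θ)).add_const (1 / 4)).const_mul L
          ).div_const 2).add (((hasDerivAt_id' θ).sub_const (1 / 2)).const_mul c)
          |>.congr_deriv (by push_cast; ring))
      (fun θ hθ => by
        have := hbound θ ⟨by linarith [hθ.1], hθ.2.le⟩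
        rwa [abs_of_nonneg (by linarith [hθ.1])] at this)
      (right_mem_Icc.2 (by norm_num))
    convert this using 1; ring
  calc ‖f 1 - f 0‖ = ‖(f 1 - f (1 / 2)) + (f (1 / 2) - f 0)‖ := by abel_nf
    _ ≤ L / 4 + c := by linarith [norm_add_le (f 1 - f (1 / 2)) (f (1 / 2) - f 0)]

/-- Expanding around the midpoint of `[x, y]` rather than around `x` gains the factor `1/4`
instead of `1/2` in the first term. -/
theorem norm_sub_sub_fderiv_midpoint_le {φ : E → F} {x y p r : E} {Λ M : ℝ}
    (hφ : Differentiable ℝ φ) (hpr : y - x = p + r)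
    (hΛ : ∀ z ∈ segment ℝ x y,
      ‖fderiv ℝ φ z p - fderiv ℝ φ (midpoint ℝ x y) p‖ ≤ Λ * ‖z - midpoint ℝ x y‖)
    (hM : ∀ z ∈ segment ℝ x y, ‖fderiv ℝ φ z‖ ≤ M) :
    ‖φ y - φ x - fderiv ℝ φ (midpoint ℝ x y) p‖ ≤ Λ * ‖y - x‖ / 4 + M * ‖r‖ := by
  set D := fderiv ℝ φ (midpoint ℝ x y) p
  have hseg : ∀ θ ∈ Icc (0 : ℝ) 1, x + θ • (y - x) ∈ segment ℝ x y := fun θ hθ => by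
    rw [segment_eq_image']; exact ⟨θ, hθ, rfl⟩
  have hmid : ∀ θ : ℝ, x + θ • (y - x) - midpoint ℝ x y = (θ - 1 / 2) • (y - x) := fun θ => by
    rw [midpoint_eq_smul_add]; simp only [invOf_eq_inv]; module
  have hderiv : ∀ θ ∈ Icc (0 : ℝ) 1, HasDerivAt (fun θ : ℝ => φ (x + θ • (y - x)) - θ • D)
      (fderiv ℝ φ (x + θ • (y - x)) (y - x) - D) θ := fun θ _ => by
    have hline : HasDerivAt (fun θ : ℝ => x + θ • (y - x)) (y - x) θ := by
      simpa using ((hasDerivAt_id θ).smul_const (y - x)).const_add x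
    exact ((hφ _).hasFDerivAt.comp_hasDerivAt θ hline).sub
      (by simpa using (hasDerivAt_id θ).smul_const D)
  have hbound : ∀ θ ∈ Icc (0 : ℝ) 1, ‖fderiv ℝ φ (x + θ • (y - x)) (y - x) - D‖
      ≤ Λ * ‖y - x‖ * |θ - 1 / 2| + M * ‖r‖ := fun θ hθ => by
    have hsplit : fderiv ℝ φ (x + θ • (y - x)) (y - x) - D
        = (fderiv ℝ φ (x + θ • (y - x)) p - D) + fderiv ℝ φ (x + θ • (y - x)) r := by
      rw [hpr, map_add]; abel
    have h1 := hΛ _ (hseg θ hθ)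
    rw [hmid, norm_smul, Real.norm_eq_abs] at h1
    have h2 := (fderiv ℝ φ (x + θ • (y - x))).le_of_opNorm_le (hM _ (hseg θ hθ)) r
    rw [hsplit]
    calc _ ≤ _ := norm_add_le _ _
      _ ≤ Λ * (|θ - 1 / 2| * ‖y - x‖) + M * ‖r‖ := add_le_add h1 h2
      _ = _ := by ring
  have := norm_sub_le_of_norm_deriv_le_abs_sub_half hderiv hbound
  simp only [one_smul, zero_smul, add_zero, add_sub_cancel] at this
  convert this using 2; abel

theorem norm_sub_le_of_norm_fderiv_le_of_norm_le {Φ : E × F → G} (hΦ : Differentiable ℝ Φ)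
    {C r₁ r₂ : ℝ} (hC : ∀ p : E × F, ‖p.1‖ ≤ r₁ → ‖p.2‖ ≤ r₂ → ‖fderiv ℝ Φ p‖ ≤ C)
    {p q : E × F} (hp₁ : ‖p.1‖ ≤ r₁) (hp₂ : ‖p.2‖ ≤ r₂) (hq₁ : ‖q.1‖ ≤ r₁) (hq₂ : ‖q.2‖ ≤ r₂) :
    ‖Φ q - Φ p‖ ≤ C * ‖q - p‖ := by
  have hmem : ∀ {w : E × F}, ‖w.1‖ ≤ r₁ → ‖w.2‖ ≤ r₂ →
      w ∈ Metric.closedBall (0 : E) r₁ ×ˢ Metric.closedBall (0 : F) r₂ := fun h₁ h₂ => by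
    simpa [Metric.mem_closedBall, dist_eq_norm] using And.intro h₁ h₂
  refine ((convex_closedBall _ _).prod (convex_closedBall _ _)).norm_image_sub_le_of_norm_fderiv_le
    (fun w _ => (hΦ w)) (fun w hw => hC w ?_ ?_) (hmem hp₁ hp₂) (hmem hq₁ hq₂)
  · simpa [dist_eq_norm] using hw.1
  · simpa [dist_eq_norm] using hw.2

theorem norm_midpoint_le_of_le {x y : E} {R : ℝ} (hx : ‖x‖ ≤ R) (hy : ‖y‖ ≤ R) :
    ‖midpoint ℝ x y‖ ≤ R := by
  simpa using (convex_closedBall (0 : E) R).midpoint_mem (by simpa using hx) (by simpa using hy)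

end MeanValue

theorem sum_range_two_mul {M : Type*} [AddCommMonoid M] (f : ℕ → M) (n : ℕ) :
    ∑ j ∈ range (2 * n), f j = ∑ i ∈ range n, (f (2 * i) + f (2 * i + 1)) := by
  induction n with
  | zero => simp
  | succ n ih => rw [Nat.mul_succ, sum_range_succ, sum_range_succ, ih, sum_range_succ, add_assoc]

theorem two_pow_mul_div_two_pow_rpow {h : ℝ} (hh : 0 ≤ h) (γ : ℝ) (m : ℕ) :
    2 ^ m * (h / 2 ^ m) ^ γ = h ^ γ * ((2 : ℝ) ^ (1 - γ)) ^ m := by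
  rw [← Real.rpow_natCast, ← Real.rpow_natCast, ← Real.rpow_mul zero_le_two,
    Real.div_rpow hh (by positivity), ← Real.rpow_mul zero_le_two, mul_div_assoc', mul_comm,
    mul_div_assoc, ← Real.rpow_sub two_pos]
  ring_nf

theorem rpow_add_le_mul_rpow {h T γ α : ℝ} (hh : 0 ≤ h) (hhT : h ≤ T) (hα : 0 ≤ α)
    (hγα : γ + α ≠ 0) : h ^ (γ + α) ≤ h ^ γ * T ^ α := by
  rw [Real.rpow_add' hh hγα]
  gcongr

theorem one_le_inv_one_sub_two_rpow {γ : ℝ} (hγ : 1 < γ) : 1 ≤ (1 - (2 : ℝ) ^ (1 - γ))⁻¹ :=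
  (one_le_inv₀ (sub_pos.2 (Real.rpow_lt_one_of_one_lt_of_neg one_lt_two (by linarith)))).2
    (by linarith [Real.rpow_nonneg zero_le_two (1 - γ)])

theorem one_half_rpow_le_four_fifths {α : ℝ} (hα : 1 / 3 ≤ α) : (1 / 2 : ℝ) ^ α ≤ 4 / 5 := by
  have hcube : ((1 / 2 : ℝ) ^ α) ^ 3 ≤ 1 / 2 := by
    rw [← Real.rpow_mul_natCast (by norm_num)]
    calc (1 / 2 : ℝ) ^ (α * (3 : ℕ)) ≤ (1 / 2) ^ (1 : ℝ) :=
          Real.rpow_le_rpow_of_exponent_ge (by norm_num) (by norm_num) (by push_cast; linarith)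
      _ = 1 / 2 := Real.rpow_one _
  by_contra! hlt
  have := pow_lt_pow_left₀ hlt (by norm_num) three_ne_zero
  norm_num at this
  linarith

noncomputable def dyadicPoint (s t : ℝ) (m i : ℕ) : ℝ := s + i * ((t - s) / 2 ^ m)

section Dyadic

variable {s t : ℝ}

theorem dyadicPoint_succ_sub (m i : ℕ) :
    dyadicPoint s t m (i + 1) - dyadicPoint s t m i = (t - s) / 2 ^ m := by
  simp only [dyadicPoint]; push_cast; ring

theorem dyadicPoint_succ_two_mul (m i : ℕ) :
    dyadicPoint s t (m + 1) (2 * i) = dyadicPoint s t m i := by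
  simp only [dyadicPoint, pow_succ]; push_cast; field_simp

theorem dyadicPoint_succ_two_mul_add_one (m i : ℕ) :
    dyadicPoint s t (m + 1) (2 * i + 1)
      = (dyadicPoint s t m i + dyadicPoint s t m (i + 1)) / 2 := by
  simp only [dyadicPoint, pow_succ]; push_cast; field_simp; ring

theorem dyadicPoint_mem_Icc (hst : s ≤ t) {m i : ℕ} (hi : i ≤ 2 ^ m) :
    dyadicPoint s t m i ∈ Icc s t := by
  have hstep : 0 ≤ (t - s) / 2 ^ m := div_nonneg (sub_nonneg.2 hst) (by positivity)
  have hi' : (i : ℝ) ≤ 2 ^ m := by exact_mod_cast hi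
  refine ⟨le_add_of_nonneg_right (mul_nonneg i.cast_nonneg hstep), ?_⟩
  calc dyadicPoint s t m i ≤ s + 2 ^ m * ((t - s) / 2 ^ m) := by rw [dyadicPoint]; gcongr
    _ = t := by field_simp; ring

theorem tendsto_div_two_pow (c : ℝ) : Tendsto (fun m : ℕ => c / 2 ^ m) atTop (𝓝 0) := by
  simpa [div_eq_mul_inv, ← inv_pow] using
    (tendsto_pow_atTop_nhds_zero_of_lt_one (by norm_num : (0 : ℝ) ≤ 2⁻¹) (by norm_num)).const_mul c

end Dyadic

namespace TimePartition

variable {M : Type*} [AddCommMonoid M] {r s t δ : ℝ}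

def sum (P : TimePartition s t) (Ξ : ℝ → ℝ → M) : M :=
  ∑ k ∈ range P.n, Ξ (P.pts k) (P.pts (k + 1))

def MeshLt (P : TimePartition s t) (δ : ℝ) : Prop :=
  ∀ k < P.n, P.pts (k + 1) - P.pts k < δ

def append (P : TimePartition r s) (Q : TimePartition s t) : TimePartition r t where
  n := P.n + Q.n
  pts k := if k < P.n then P.pts k else Q.pts (k - P.n)
  first := by
    split_ifs with h
    · exact P.first
    · have hP : P.n = 0 := by omega
      have hrs := P.last
      rw [hP, P.first] at hrs
      simp only [hP, Nat.sub_zero, Q.first, hrs]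
  last := by simp [Q.last]
  mono k hk := by
    by_cases hkP : k + 1 < P.n
    · simp only [if_pos hkP, if_pos (Nat.lt_of_succ_lt hkP)]
      exact P.mono k (Nat.lt_of_succ_lt hkP)
    · rw [if_neg hkP]
      split_ifs with h
      · have hs : P.pts (k + 1) = s := by rw [show k + 1 = P.n by omega]; exact P.last
        rw [show k + 1 - P.n = 0 by omega, Q.first]
        exact (P.mono k h).trans_eq hs
      · rw [show k + 1 - P.n = k - P.n + 1 by omega]
        exact Q.mono _ (by omega)

theorem append_pts_of_le (P : TimePartition r s) (Q : TimePartition s t) {k : ℕ} (hk : k ≤ P.n) :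
    (P.append Q).pts k = P.pts k := by
  change (if k < P.n then P.pts k else Q.pts (k - P.n)) = P.pts k
  split_ifs with h
  · rfl
  · rw [show k = P.n by omega, Nat.sub_self, Q.first, P.last]

theorem append_pts_add (P : TimePartition r s) (Q : TimePartition s t) (i : ℕ) :
    (P.append Q).pts (P.n + i) = Q.pts i := by
  change (if P.n + i < P.n then P.pts (P.n + i) else Q.pts (P.n + i - P.n)) = Q.pts i
  rw [if_neg (by omega), Nat.add_sub_cancel_left]

theorem sum_append (P : TimePartition r s) (Q : TimePartition s t) (Ξ : ℝ → ℝ → M) :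
    (P.append Q).sum Ξ = P.sum Ξ + Q.sum Ξ := by
  refine (sum_range_add _ P.n Q.n).trans (congrArg₂ _ (sum_congr rfl fun k hk => ?_)
    (sum_congr rfl fun i _ => ?_))
  · have hk := mem_range.1 hk
    rw [append_pts_of_le P Q hk.le, append_pts_of_le P Q hk]
  · rw [append_pts_add, add_assoc, append_pts_add]

theorem MeshLt.mono {P : TimePartition s t} {δ' : ℝ} (hP : P.MeshLt δ) (h : δ ≤ δ') :
    P.MeshLt δ' := fun k hk => (hP k hk).trans_le h

theorem MeshLt.append {P : TimePartition r s} {Q : TimePartition s t} (hP : P.MeshLt δ)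
    (hQ : Q.MeshLt δ) : (P.append Q).MeshLt δ := by
  intro k hk
  by_cases hkP : k < P.n
  · rw [append_pts_of_le P Q hkP, append_pts_of_le P Q hkP.le]
    exact hP k hkP
  · obtain ⟨i, rfl⟩ : ∃ i, k = P.n + i := ⟨k - P.n, by omega⟩
    rw [add_assoc, append_pts_add, append_pts_add]
    exact hQ i (by change P.n + i < P.n + Q.n at hk; omega)

noncomputable def dyadic (hst : s < t) (m : ℕ) : TimePartition s t where
  n := 2 ^ m
  pts := dyadicPoint s t m
  first := by simp [dyadicPoint]
  last := by simp only [dyadicPoint]; push_cast; field_simp; ring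
  mono i _ := by
    rw [← sub_pos, dyadicPoint_succ_sub]
    exact div_pos (sub_pos.2 hst) (by positivity)

theorem dyadic_pts (hst : s < t) (m : ℕ) : (dyadic hst m).pts = dyadicPoint s t m := rfl

theorem meshLt_dyadic (hst : s < t) {m : ℕ} (hm : (t - s) / 2 ^ m < δ) :
    (dyadic hst m).MeshLt δ := fun i _ => by
  rw [dyadic_pts, dyadicPoint_succ_sub]
  exact hm

theorem exists_meshLt (hst : s ≤ t) (hδ : 0 < δ) : ∃ P : TimePartition s t, P.MeshLt δ := by
  rcases hst.eq_or_lt with rfl | hst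
  · exact ⟨⟨0, fun _ => s, rfl, rfl, by simp⟩, by simp [MeshLt]⟩
  · obtain ⟨m, hm⟩ := ((tendsto_div_two_pow (t - s)).eventually (gt_mem_nhds hδ)).exists
    exact ⟨dyadic hst m, meshLt_dyadic hst hm⟩

end TimePartition

open TimePartition

section Sewing

variable {E : Type*} [NormedAddCommGroup E] {s t : ℝ}

def HasPartitionLimit (Ξ : ℝ → ℝ → E) (s t : ℝ) (I : E) : Prop :=
  ∀ ε > 0, ∃ δ > 0, ∀ P : TimePartition s t, P.MeshLt δ → ‖P.sum Ξ - I‖ ≤ ε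

theorem HasPartitionLimit.sub {Ξ : ℝ → ℝ → E} {r : ℝ} {I₁ I₂ : E}
    (h₁ : HasPartitionLimit Ξ r s I₁) (h₂ : HasPartitionLimit Ξ r t I₂) (hrs : r ≤ s) :
    HasPartitionLimit Ξ s t (I₂ - I₁) := by
  intro ε hε
  obtain ⟨δ₁, hδ₁, hP₁⟩ := h₁ (ε / 2) (half_pos hε)
  obtain ⟨δ₂, hδ₂, hP₂⟩ := h₂ (ε / 2) (half_pos hε)
  obtain ⟨P, hP⟩ := exists_meshLt hrs (lt_min hδ₁ hδ₂)
  refine ⟨min δ₁ δ₂, lt_min hδ₁ hδ₂, fun Q hQ => ?_⟩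
  have hsplit : Q.sum Ξ - (I₂ - I₁) = ((P.append Q).sum Ξ - I₂) - (P.sum Ξ - I₁) := by
    rw [sum_append]; abel
  rw [hsplit]
  calc _ ≤ ‖(P.append Q).sum Ξ - I₂‖ + ‖P.sum Ξ - I₁‖ := norm_sub_le _ _
    _ ≤ ε / 2 + ε / 2 :=
      add_le_add (hP₂ _ ((hP.append hQ).mono (min_le_right _ _)))
        (hP₁ _ (hP.mono (min_le_left _ _)))
    _ = ε := add_halves ε

theorem HasPartitionLimit.tendsto_sum_dyadic {Ξ : ℝ → ℝ → E} {I : E}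
    (h : HasPartitionLimit Ξ s t I) (hst : s < t) :
    Tendsto (fun m => (dyadic hst m).sum Ξ) atTop (𝓝 I) := by
  refine Metric.tendsto_atTop.2 fun ε hε => ?_
  obtain ⟨δ, hδ, hP⟩ := h (ε / 2) (half_pos hε)
  obtain ⟨N, hN⟩ := eventually_atTop.1 ((tendsto_div_two_pow (t - s)).eventually (gt_mem_nhds hδ))
  exact ⟨N, fun m hm => (dist_eq_norm _ _).trans_lt
    ((hP _ (meshLt_dyadic hst (hN m hm))).trans_lt (half_lt_self hε))⟩

theorem TimePartition.sum_sub (P : TimePartition s t) (Ξ Ξ' : ℝ → ℝ → E) :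
    P.sum (fun a b => Ξ a b - Ξ' a b) = P.sum Ξ - P.sum Ξ' :=
  sum_sub_distrib _ _

theorem sum_dyadic_sub_succ (Ξ : ℝ → ℝ → E) (hst : s < t) (m : ℕ) :
    (dyadic hst m).sum Ξ - (dyadic hst (m + 1)).sum Ξ
      = (dyadic hst m).sum (fun a b => Ξ a b - Ξ a ((a + b) / 2) - Ξ ((a + b) / 2) b) := by
  change ∑ i ∈ range (2 ^ m), _ - ∑ j ∈ range (2 ^ (m + 1)), _ = ∑ i ∈ range (2 ^ m), _
  rw [pow_succ', sum_range_two_mul, ← sum_sub_distrib]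
  refine sum_congr rfl fun i _ => ?_
  simp only [dyadic_pts]
  rw [show 2 * i + 1 + 1 = 2 * (i + 1) by ring, dyadicPoint_succ_two_mul,
    dyadicPoint_succ_two_mul, dyadicPoint_succ_two_mul_add_one]
  abel

theorem norm_sum_dyadic_le {F : ℝ → ℝ → E} {C γ : ℝ} (hst : s < t)
    (hF : ∀ a ∈ Icc s t, ∀ b ∈ Icc s t, a ≤ b → ‖F a b‖ ≤ C * (b - a) ^ γ) (m : ℕ) :
    ‖(dyadic hst m).sum F‖ ≤ C * (t - s) ^ γ * ((2 : ℝ) ^ (1 - γ)) ^ m := by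
  have hstep : 0 ≤ (t - s) / 2 ^ m := div_nonneg (sub_nonneg.2 hst.le) (by positivity)
  calc ‖(dyadic hst m).sum F‖ ≤ ∑ _i ∈ range (2 ^ m), C * ((t - s) / 2 ^ m) ^ γ := by
        refine (norm_sum_le _ _).trans (sum_le_sum fun i hi => ?_)
        have hi := mem_range.1 hi
        have := hF _ (dyadicPoint_mem_Icc hst.le hi.le) _ (dyadicPoint_mem_Icc hst.le hi)
          (by rw [← sub_nonneg, dyadicPoint_succ_sub]; exact hstep)
        rwa [dyadicPoint_succ_sub] at this
    _ = C * (2 ^ m * ((t - s) / 2 ^ m) ^ γ) := by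
        rw [sum_const, card_range, nsmul_eq_mul]; push_cast; ring
    _ = _ := by rw [two_pow_mul_div_two_pow_rpow (sub_nonneg.2 hst.le)]; ring

/-- Refining the `m`-th dyadic partition changes the sum by `2 ^ m` defects of size
`C ((t - s) / 2 ^ m) ^ γ`; these add up to a geometric series of ratio `2 ^ (1 - γ)`. -/
theorem norm_sum_dyadic_sub_le {Ξ : ℝ → ℝ → E} {C γ : ℝ} (hst : s < t) (hγ : 1 < γ) (hC : 0 ≤ C)
    (hδ : ∀ a ∈ Icc s t, ∀ b ∈ Icc s t, a ≤ b →
      ‖Ξ a b - Ξ a ((a + b) / 2) - Ξ ((a + b) / 2) b‖ ≤ C * (b - a) ^ γ) (m : ℕ) :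
    ‖(dyadic hst m).sum Ξ - Ξ s t‖ ≤ (1 - 2 ^ (1 - γ))⁻¹ * C * (t - s) ^ γ := by
  set q : ℝ := 2 ^ (1 - γ)
  have hq1 : q < 1 := Real.rpow_lt_one_of_one_lt_of_neg one_lt_two (by linarith)
  have hdyadic_zero : (dyadic hst 0).sum Ξ = Ξ s t := by
    simp [TimePartition.sum, dyadic, dyadicPoint]
  have htel : Ξ s t - (dyadic hst m).sum Ξ
      = ∑ j ∈ range m, ((dyadic hst j).sum Ξ - (dyadic hst (j + 1)).sum Ξ) := by
    rw [sum_range_sub' (fun j => (dyadic hst j).sum Ξ), hdyadic_zero]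
  calc ‖(dyadic hst m).sum Ξ - Ξ s t‖ ≤ ∑ j ∈ range m, C * (t - s) ^ γ * q ^ j := by
        rw [norm_sub_rev, htel]
        refine (norm_sum_le _ _).trans (sum_le_sum fun j _ => ?_)
        rw [sum_dyadic_sub_succ]
        exact norm_sum_dyadic_le hst hδ j
    _ = C * (t - s) ^ γ * ∑ j ∈ Ico 0 m, q ^ j := by rw [mul_sum, range_eq_Ico]
    _ ≤ C * (t - s) ^ γ * (q ^ 0 / (1 - q)) := by
        gcongr
        exact geom_sum_Ico_le_of_lt_one (by positivity) hq1
    _ = _ := by ring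

theorem HasPartitionLimit.norm_sub_le {Ξ₀ Ξ : ℝ → ℝ → E} {I : E} {C C₀ γ : ℝ}
    (h : HasPartitionLimit Ξ₀ s t I) (hst : s < t) (hγ : 1 < γ) (hC : 0 ≤ C)
    (hclose : ∀ a ∈ Icc s t, ∀ b ∈ Icc s t, a ≤ b → ‖Ξ a b - Ξ₀ a b‖ ≤ C₀ * (b - a) ^ γ)
    (hδ : ∀ a ∈ Icc s t, ∀ b ∈ Icc s t, a ≤ b →
      ‖Ξ a b - Ξ a ((a + b) / 2) - Ξ ((a + b) / 2) b‖ ≤ C * (b - a) ^ γ) :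
    ‖I - Ξ s t‖ ≤ (1 - 2 ^ (1 - γ))⁻¹ * C * (t - s) ^ γ := by
  have hq : Tendsto (fun m : ℕ => ((2 : ℝ) ^ (1 - γ)) ^ m) atTop (𝓝 0) :=
    tendsto_pow_atTop_nhds_zero_of_lt_one (by positivity)
      (Real.rpow_lt_one_of_one_lt_of_neg one_lt_two (by linarith))
  have hclose_lim : Tendsto (fun m => (dyadic hst m).sum fun a b => Ξ a b - Ξ₀ a b) atTop (𝓝 0) :=
    squeeze_zero_norm (norm_sum_dyadic_le hst hclose)
      (by simpa using hq.const_mul (C₀ * (t - s) ^ γ))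
  have hlim : Tendsto (fun m => (dyadic hst m).sum Ξ) atTop (𝓝 I) := by
    simpa [TimePartition.sum_sub] using (h.tendsto_sum_dyadic hst).add hclose_lim
  exact le_of_tendsto (hlim.sub_const (Ξ s t)).norm
    (Eventually.of_forall (norm_sum_dyadic_sub_le hst hγ hC hδ))

end Sewing

noncomputable def growthWeight (β : ℕ → ℝ) (x y : ℝ) : ℝ :=
  (1 + x) ^ max (β 0) (β 1) * (1 + y) ^ max (β 1) (β 2)

section GrowthWeight

variable {β : ℕ → ℝ} {x y x' y' : ℝ}

theorem one_le_growthWeight (hβ : 0 ≤ β 1) (hx : 0 ≤ x) (hy : 0 ≤ y) : 1 ≤ growthWeight β x y :=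
  one_le_mul_of_one_le_of_one_le (Real.one_le_rpow (by linarith) (hβ.trans (le_max_right _ _)))
    (Real.one_le_rpow (by linarith) (hβ.trans (le_max_left _ _)))

theorem growthWeight_le_growthWeight (hβ : 0 ≤ β 1) (hx : 0 ≤ x) (hxx' : x ≤ x') (hy : 0 ≤ y)
    (hyy' : y ≤ y') : growthWeight β x y ≤ growthWeight β x' y' :=
  mul_le_mul
    (Real.rpow_le_rpow (by linarith) (by linarith) (hβ.trans (le_max_right _ _)))
    (Real.rpow_le_rpow (by linarith) (by linarith) (hβ.trans (le_max_left _ _)))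
    (Real.rpow_nonneg (by linarith) _) (Real.rpow_nonneg (by linarith) _)

theorem rpow_le_growthWeight (hβ : 0 ≤ β 1) (hx : 0 ≤ x) (hy : 0 ≤ y) :
    (1 + y) ^ β 1 ≤ growthWeight β x y :=
  (Real.rpow_le_rpow_of_exponent_le (by linarith) (le_max_left _ _)).trans
    (le_mul_of_one_le_left (Real.rpow_nonneg (by linarith) _)
      (Real.one_le_rpow (by linarith) (hβ.trans (le_max_right _ _))))

theorem rpow_mul_rpow_le_growthWeight (hβ₀ : 0 ≤ β 0) (hβ₁ : 0 ≤ β 1)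
    {x y R₁ R₂ : ℝ} (hx : 0 ≤ x) (hxR : x ≤ R₁) (hy : 0 ≤ y) (hyR : y ≤ R₂) :
    (1 + x) ^ β 0 * (1 + y) ^ β 1 ≤ growthWeight β R₁ R₂ :=
  mul_le_mul
    ((Real.rpow_le_rpow (by linarith) (by linarith) hβ₀).trans
      (Real.rpow_le_rpow_of_exponent_le (by linarith) (le_max_left _ _)))
    ((Real.rpow_le_rpow (by linarith) (by linarith) hβ₁).trans
      (Real.rpow_le_rpow_of_exponent_le (by linarith) (le_max_left _ _)))
    (by positivity) (Real.rpow_nonneg (by linarith) _)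

end GrowthWeight

namespace RoughPath2

variable {T α : ℝ} {β : ℕ → ℝ} {W : ℝ → V → V} {WW : ℝ → ℝ → V × V → V} {NW NWW : ℝ}
  {a u b s t : ℝ}

theorem norm_W_sub_le (hrp : RoughPath2 T α β W WW NW NWW) (hs : s ∈ Icc 0 T) (ht : t ∈ Icc 0 T)
    (x : V) : ‖W t x - W s x‖ ≤ NW * |t - s| ^ α * (1 + ‖x‖) ^ β 0 := by
  simpa using hrp.2.1 0 (by norm_num) s hs t ht x

theorem norm_fderiv_W_sub_le (hrp : RoughPath2 T α β W WW NW NWW) (hs : s ∈ Icc 0 T)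
    (ht : t ∈ Icc 0 T) (x : V) :
    ‖fderiv ℝ (fun z => W t z - W s z) x‖ ≤ NW * |t - s| ^ α * (1 + ‖x‖) ^ β 1 := by
  simpa using hrp.2.1 1 (by norm_num) s hs t ht x

theorem differentiable_W_sub (hrp : RoughPath2 T α β W WW NW NWW) (hs : s ∈ Icc 0 T)
    (ht : t ∈ Icc 0 T) : Differentiable ℝ (fun z => W t z - W s z) :=
  ((hrp.1 t ht).differentiable two_ne_zero).sub ((hrp.1 s hs).differentiable two_ne_zero)

theorem norm_WW_le (hrp : RoughPath2 T α β W WW NW NWW) (hs : s ∈ Icc 0 T) (ht : t ∈ Icc 0 T)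
    (x y : V) : ‖WW s t (x, y)‖ ≤ NWW * |t - s| ^ (2 * α) * (1 + ‖x‖) ^ β 0 * (1 + ‖y‖) ^ β 1 :=
  hrp.2.2.2.1 s hs t ht x y

theorem chen (hrp : RoughPath2 T α β W WW NW NWW) (ha : a ∈ Icc 0 T) (hu : u ∈ Icc 0 T)
    (hb : b ∈ Icc 0 T) (x y : V) :
    WW a b (x, y) - WW a u (x, y) - WW u b (x, y)
      = fderiv ℝ (fun z => W b z - W u z) y (W u x - W a x) :=
  hrp.2.2.2.2.2 a ha u hu b hb x y

theorem norm_WW_sub_le (hrp : RoughPath2 T α β W WW NW NWW) (hβ : 0 ≤ β 1) (hNWW : 0 ≤ NWW)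
    (hs : s ∈ Icc 0 T) (ht : t ∈ Icc 0 T) {R₁ R₂ : ℝ} {p q : V × V} (hp₁ : ‖p.1‖ ≤ R₁)
    (hp₂ : ‖p.2‖ ≤ R₂) (hq₁ : ‖q.1‖ ≤ R₁) (hq₂ : ‖q.2‖ ≤ R₂) :
    ‖WW s t q - WW s t p‖ ≤ NWW * |t - s| ^ (2 * α) * growthWeight β R₁ R₂ * ‖q - p‖ := by
  refine norm_sub_le_of_norm_fderiv_le_of_norm_le
    ((hrp.2.2.1 s hs t ht).differentiable one_ne_zero) (fun w hw₁ hw₂ => ?_) hp₁ hp₂ hq₁ hq₂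
  calc ‖fderiv ℝ (WW s t) w‖
      ≤ NWW * |t - s| ^ (2 * α) * growthWeight β ‖w.1‖ ‖w.2‖ := by
        rw [growthWeight, ← mul_assoc]; exact hrp.2.2.2.2.1 s hs t ht w.1 w.2
    _ ≤ NWW * |t - s| ^ (2 * α) * growthWeight β R₁ R₂ := by
        gcongr; exact growthWeight_le_growthWeight hβ (norm_nonneg _) hw₁ (norm_nonneg _) hw₂

theorem norm_WW_sub_le_right (hrp : RoughPath2 T α β W WW NW NWW) (hβ : 0 ≤ β 1)
    (hNWW : 0 ≤ NWW) (hs : s ∈ Icc 0 T) (ht : t ∈ Icc 0 T) {R₁ R₂ : ℝ} {v y z : V}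
    (hv : ‖v‖ ≤ R₁) (hy : ‖y‖ ≤ R₂) (hz : ‖z‖ ≤ R₂) :
    ‖WW s t (v, z) - WW s t (v, y)‖ ≤ NWW * |t - s| ^ (2 * α) * growthWeight β R₁ R₂ * ‖z - y‖ := by
  simpa [Prod.norm_def] using
    hrp.norm_WW_sub_le hβ hNWW hs ht (p := (v, y)) (q := (v, z)) hv hy hv hz

/-- The Taylor remainder of `W_{u,b}` along `x → y` is controlled without second derivatives of
`W`: by Chen's relation, `z ↦ DW_{u,b}(z) (W_{a,u} v)` is a combination of three `𝕎`'s. -/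
theorem norm_taylor_midpoint_le (hrp : RoughPath2 T α β W WW NW NWW) (hβ : 0 ≤ β 1)
    (hNW : 0 ≤ NW) (hNWW : 0 ≤ NWW) (ha : a ∈ Icc 0 T) (hu : u ∈ Icc 0 T) (hb : b ∈ Icc 0 T)
    {R₁ R : ℝ} {v x y : V} (hv : ‖v‖ ≤ R₁) (hx : ‖x‖ ≤ R) (hy : ‖y‖ ≤ R) :
    ‖(W b y - W u y) - (W b x - W u x)
        - fderiv ℝ (fun z => W b z - W u z) (midpoint ℝ x y) (W u v - W a v)‖
      ≤ NWW * (|b - a| ^ (2 * α) + |u - a| ^ (2 * α) + |b - u| ^ (2 * α))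
            * growthWeight β R₁ R * ‖y - x‖ / 4
        + NW * |b - u| ^ α * (1 + R) ^ β 1 * ‖y - x - (W u v - W a v)‖ := by
  have hball : ∀ z ∈ segment ℝ x y, ‖z‖ ≤ R := fun z hz => by
    simpa using (convex_closedBall (0 : V) R).segment_subset (by simpa using hx)
      (by simpa using hy) hz
  have hmid : ‖midpoint ℝ x y‖ ≤ R := hball _ (midpoint_mem_segment x y)
  refine norm_sub_sub_fderiv_midpoint_le (hrp.differentiable_W_sub hu hb) (by abel)
    (fun z hz => ?_) (fun z hz => ?_)
  · rw [← hrp.chen ha hu hb, ← hrp.chen ha hu hb]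
    have h₁ := hrp.norm_WW_sub_le_right hβ hNWW ha hb hv hmid (hball z hz)
    have h₂ := hrp.norm_WW_sub_le_right hβ hNWW ha hu hv hmid (hball z hz)
    have h₃ := hrp.norm_WW_sub_le_right hβ hNWW hu hb hv hmid (hball z hz)
    calc _ = ‖(WW a b (v, z) - WW a b (v, midpoint ℝ x y))
            - (WW a u (v, z) - WW a u (v, midpoint ℝ x y))
            - (WW u b (v, z) - WW u b (v, midpoint ℝ x y))‖ := by congr 1; abel
      _ ≤ ‖WW a b (v, z) - WW a b (v, midpoint ℝ x y)‖
          + ‖WW a u (v, z) - WW a u (v, midpoint ℝ x y)‖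
          + ‖WW u b (v, z) - WW u b (v, midpoint ℝ x y)‖ :=
        (norm_sub_le _ _).trans (add_le_add_left (norm_sub_le _ _) _)
      _ ≤ _ := by linarith
  · calc ‖fderiv ℝ (fun z => W b z - W u z) z‖ ≤ NW * |b - u| ^ α * (1 + ‖z‖) ^ β 1 :=
          hrp.norm_fderiv_W_sub_le hu hb z
      _ ≤ NW * |b - u| ^ α * (1 + R) ^ β 1 := by gcongr; exact hball z hz

end RoughPath2

/-- `(Y, Ẏ) ∈ 𝓔_W^{2α}` on `[0, T]`: `MY`, `MYd` bound `‖Y‖_∞`, `‖Ẏ‖_∞`, and `CY`, `CYd`, `CR`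
bound `‖Y‖_α`, `‖Ẏ‖_α`, `‖R^Y‖_{2α}`. -/
structure ControlledPath {E : Type*} [NormedAddCommGroup E] (T α : ℝ) (W : ℝ → E → E)
    (Y Yd : ℝ → E) (MY MYd CY CYd CR : ℝ) : Prop where
  norm_le : ∀ t ∈ Icc 0 T, ‖Y t‖ ≤ MY
  norm_deriv_le : ∀ t ∈ Icc 0 T, ‖Yd t‖ ≤ MYd
  holder : ∀ s ∈ Icc 0 T, ∀ t ∈ Icc 0 T, ‖Y t - Y s‖ ≤ CY * |t - s| ^ α
  holder_deriv : ∀ s ∈ Icc 0 T, ∀ t ∈ Icc 0 T, ‖Yd t - Yd s‖ ≤ CYd * |t - s| ^ α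
  holder_remainder : ∀ s ∈ Icc 0 T, ∀ t ∈ Icc 0 T,
    ‖Y t - Y s - (W t (Yd s) - W s (Yd s))‖ ≤ CR * |t - s| ^ (2 * α)
  holder_nonneg : 0 ≤ CY ∧ 0 ≤ CYd ∧ 0 ≤ CR

/-- `TimePartition.sum` of this germ is `riemannSum W WW Y Yd` definitionally. -/
noncomputable def riemannGerm (W : ℝ → V → V) (WW : ℝ → ℝ → V × V → V) (Y Yd : ℝ → V)
    (a b : ℝ) : V :=
  (W b (Y a) - W a (Y a)) + WW a b (Yd a, Y a)

/-- Evaluating `𝕎` at the mean of `Y a` and `Y ((a + b) / 2)` rather than at `Y a` centres the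
Taylor expansion hidden in the defect of this germ (see `norm_sub_sub_fderiv_midpoint_le`); with
the uncentred germ the numerical constants do not fit under `k_α`. -/
noncomputable def midpointGerm (W : ℝ → V → V) (WW : ℝ → ℝ → V × V → V) (Y Yd : ℝ → V)
    (a b : ℝ) : V :=
  (W b (Y a) - W a (Y a)) + WW a b (Yd a, midpoint ℝ (Y a) (Y ((a + b) / 2)))

theorem ControlledPath.holder_of_le {E : Type*} [NormedAddCommGroup E] {T α : ℝ}
    {W : ℝ → E → E} {Y Yd : ℝ → E} {MY MYd CY CYd CR a b : ℝ}
    (hY : ControlledPath T α W Y Yd MY MYd CY CYd CR)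
    (ha : a ∈ Icc 0 T) (hb : b ∈ Icc 0 T) (hab : a ≤ b) : ‖Y b - Y a‖ ≤ CY * (b - a) ^ α := by
  simpa [abs_of_nonneg (sub_nonneg.2 hab)] using hY.holder a ha b hb

theorem ControlledPath.growthWeight_nonneg {E : Type*} [NormedAddCommGroup E] {T α : ℝ}
    {β : ℕ → ℝ} {W : ℝ → E → E} {Y Yd : ℝ → E} {MY MYd CY CYd CR a : ℝ}
    (hY : ControlledPath T α W Y Yd MY MYd CY CYd CR) (hβ : 0 ≤ β 1) (ha : a ∈ Icc 0 T) :
    0 ≤ growthWeight β MYd MY :=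
  zero_le_one.trans (one_le_growthWeight hβ ((norm_nonneg _).trans (hY.norm_deriv_le a ha))
    ((norm_nonneg _).trans (hY.norm_le a ha)))

theorem midpoint_mem_Icc {T a b : ℝ} (ha : a ∈ Icc 0 T) (hb : b ∈ Icc 0 T) :
    (a + b) / 2 ∈ Icc 0 T :=
  ⟨by linarith [ha.1, hb.1], by linarith [ha.2, hb.2]⟩

section Integral

variable {T α : ℝ} {β : ℕ → ℝ} {W : ℝ → V → V} {WW : ℝ → ℝ → V × V → V} {NW NWW : ℝ}
  {Y Yd : ℝ → V} {MY MYd CY CYd CR : ℝ} {a u b s t : ℝ}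

theorem norm_taylor_defect_le (hrp : RoughPath2 T α β W WW NW NWW)
    (hY : ControlledPath T α W Y Yd MY MYd CY CYd CR) (hβ : 0 ≤ β 1) (hNW : 0 ≤ NW)
    (hNWW : 0 ≤ NWW) (ha : a ∈ Icc 0 T) (hb : b ∈ Icc 0 T) (hab : a ≤ b) :
    ‖(W b (Y ((a + b) / 2)) - W ((a + b) / 2) (Y ((a + b) / 2)))
        - (W b (Y a) - W ((a + b) / 2) (Y a))
        - fderiv ℝ (fun z => W b z - W ((a + b) / 2) z) (midpoint ℝ (Y a) (Y ((a + b) / 2)))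
            (W ((a + b) / 2) (Yd a) - W a (Yd a))‖
      ≤ growthWeight β MYd MY * (NWW * CY * ((b - a) ^ (2 * α) + 2 * ((b - a) / 2) ^ (2 * α))
            * ((b - a) / 2) ^ α / 4 + NW * CR * ((b - a) / 2) ^ α * ((b - a) / 2) ^ (2 * α)) := by
  set u := (a + b) / 2
  have hu := midpoint_mem_Icc ha hb
  have hua : u - a = (b - a) / 2 := by ring
  have hbu : b - u = (b - a) / 2 := by ring
  have hh : 0 ≤ (b - a) / 2 := by linarith
  have hΔ : ‖Y u - Y a‖ ≤ CY * ((b - a) / 2) ^ α := hua ▸ hY.holder_of_le ha hu (by linarith)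
  have hR : ‖Y u - Y a - (W u (Yd a) - W a (Yd a))‖ ≤ CR * ((b - a) / 2) ^ (2 * α) := by
    simpa [abs_of_nonneg, hua, hh] using hY.holder_remainder a ha u hu
  have hMYd := (norm_nonneg _).trans (hY.norm_deriv_le a ha)
  have hMY := (norm_nonneg _).trans (hY.norm_le a ha)
  have hK := rpow_le_growthWeight (β := β) hβ hMYd hMY
  have hK0 := hY.growthWeight_nonneg hβ ha
  refine (hrp.norm_taylor_midpoint_le hβ hNW hNWW ha hu hb (hY.norm_deriv_le a ha)
    (hY.norm_le a ha) (hY.norm_le u hu)).trans ?_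
  rw [abs_of_nonneg (by linarith : 0 ≤ b - a), hua, hbu, abs_of_nonneg hh]
  have h₁ : NWW * ((b - a) ^ (2 * α) + ((b - a) / 2) ^ (2 * α) + ((b - a) / 2) ^ (2 * α))
      * growthWeight β MYd MY * ‖Y u - Y a‖ / 4 ≤ NWW * ((b - a) ^ (2 * α)
        + ((b - a) / 2) ^ (2 * α) + ((b - a) / 2) ^ (2 * α)) * growthWeight β MYd MY
          * (CY * ((b - a) / 2) ^ α) / 4 := by
    gcongr
  have h₂ : NW * ((b - a) / 2) ^ α * (1 + MY) ^ β 1 * ‖Y u - Y a - (W u (Yd a) - W a (Yd a))‖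
      ≤ NW * ((b - a) / 2) ^ α * growthWeight β MYd MY * (CR * ((b - a) / 2) ^ (2 * α)) := by
    gcongr
  linarith

theorem norm_WW_midpoint_sub_le (hrp : RoughPath2 T α β W WW NW NWW)
    (hY : ControlledPath T α W Y Yd MY MYd CY CYd CR) (hβ : 0 ≤ β 1)
    (hNWW : 0 ≤ NWW) (ha : a ∈ Icc 0 T) (hu : u ∈ Icc 0 T) (hau : a ≤ u) :
    ‖WW a u (Yd a, midpoint ℝ (Y a) (Y u)) - WW a u (Yd a, midpoint ℝ (Y a) (Y ((a + u) / 2)))‖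
      ≤ NWW * (u - a) ^ (2 * α) * growthWeight β MYd MY * (CY * ((u - a) / 2) ^ α / 2) := by
  have hm := midpoint_mem_Icc ha hu
  refine (hrp.norm_WW_sub_le_right hβ hNWW ha hu (hY.norm_deriv_le a ha)
    (norm_midpoint_le_of_le (hY.norm_le a ha) (hY.norm_le _ hm))
    (norm_midpoint_le_of_le (hY.norm_le a ha) (hY.norm_le u hu))).trans ?_
  rw [abs_of_nonneg (by linarith)]
  have hK0 := hY.growthWeight_nonneg hβ ha
  gcongr
  rw [← dist_eq_norm]
  refine (dist_midpoint_midpoint_le _ _ _ _).trans ?_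
  rw [dist_self, zero_add, dist_eq_norm, show (u - a) / 2 = u - (a + u) / 2 by ring]
  gcongr
  exact hY.holder_of_le hm hu (by linarith)

theorem norm_WW_sub_WW_midpoint_le (hrp : RoughPath2 T α β W WW NW NWW)
    (hY : ControlledPath T α W Y Yd MY MYd CY CYd CR) (hα : 0 ≤ α) (hβ : 0 ≤ β 1)
    (hNWW : 0 ≤ NWW) (ha : a ∈ Icc 0 T) (hu : u ∈ Icc 0 T) (hb : b ∈ Icc 0 T) (hau : a ≤ u)
    (hub : u ≤ b) :
    ‖WW u b (Yd a, midpoint ℝ (Y a) (Y u)) - WW u b (Yd u, midpoint ℝ (Y u) (Y ((u + b) / 2)))‖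
      ≤ NWW * (b - u) ^ (2 * α) * growthWeight β MYd MY
          * (CYd * (u - a) ^ α + CY * (b - a) ^ α / 2) := by
  have hm := midpoint_mem_Icc hu hb
  refine (hrp.norm_WW_sub_le hβ hNWW hu hb (hY.norm_deriv_le u hu)
    (norm_midpoint_le_of_le (hY.norm_le u hu) (hY.norm_le _ hm)) (hY.norm_deriv_le a ha)
    (norm_midpoint_le_of_le (hY.norm_le a ha) (hY.norm_le u hu))).trans ?_
  rw [abs_of_nonneg (by linarith)]
  have hK0 := hY.growthWeight_nonneg hβ ha
  gcongr
  have hYd : ‖Yd a - Yd u‖ ≤ CYd * (u - a) ^ α := by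
    simpa [abs_of_nonneg (sub_nonneg.2 hau), norm_sub_rev] using hY.holder_deriv a ha u hu
  have hmid : ‖midpoint ℝ (Y a) (Y u) - midpoint ℝ (Y u) (Y ((u + b) / 2))‖
      ≤ CY * (b - a) ^ α / 2 := by
    rw [← dist_eq_norm, midpoint_comm (Y u)]
    refine (dist_midpoint_midpoint_le _ _ _ _).trans ?_
    rw [dist_self, add_zero, dist_comm, dist_eq_norm]
    calc ‖Y ((u + b) / 2) - Y a‖ / 2 ≤ CY * ((u + b) / 2 - a) ^ α / 2 := by
          gcongr; exact hY.holder_of_le ha hm (by linarith)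
      _ ≤ CY * (b - a) ^ α / 2 := by gcongr <;> linarith [hY.holder_nonneg.1]
  exact (Prod.norm_def _).trans_le
    ((max_le_add_of_nonneg (norm_nonneg _) (norm_nonneg _)).trans (add_le_add hYd hmid))

theorem norm_midpointGerm_defect_le_rpow (hrp : RoughPath2 T α β W WW NW NWW)
    (hY : ControlledPath T α W Y Yd MY MYd CY CYd CR) (hα : 0 ≤ α) (hβ : 0 ≤ β 1) (hNW : 0 ≤ NW)
    (hNWW : 0 ≤ NWW) (ha : a ∈ Icc 0 T) (hb : b ∈ Icc 0 T) (hab : a ≤ b) :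
    ‖midpointGerm W WW Y Yd a b - midpointGerm W WW Y Yd a ((a + b) / 2)
        - midpointGerm W WW Y Yd ((a + b) / 2) b‖
      ≤ growthWeight β MYd MY * (NWW * CY * ((b - a) ^ (2 * α) + 2 * ((b - a) / 2) ^ (2 * α))
            * ((b - a) / 2) ^ α / 4 + NW * CR * ((b - a) / 2) ^ α * ((b - a) / 2) ^ (2 * α)
          + NWW * CY * ((b - a) / 2) ^ (2 * α) * ((b - a) / 4) ^ α / 2
          + NWW * ((b - a) / 2) ^ (2 * α) * (CYd * ((b - a) / 2) ^ α + CY * (b - a) ^ α / 2)) := by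
  set u := (a + b) / 2
  have hu := midpoint_mem_Icc ha hb
  have hdecomp : midpointGerm W WW Y Yd a b - midpointGerm W WW Y Yd a u
      - midpointGerm W WW Y Yd u b
      = (WW a u (Yd a, midpoint ℝ (Y a) (Y u))
            - WW a u (Yd a, midpoint ℝ (Y a) (Y ((a + u) / 2))))
        + (WW u b (Yd a, midpoint ℝ (Y a) (Y u))
            - WW u b (Yd u, midpoint ℝ (Y u) (Y ((u + b) / 2))))
        - ((W b (Y u) - W u (Y u)) - (W b (Y a) - W u (Y a))
          - fderiv ℝ (fun z => W b z - W u z) (midpoint ℝ (Y a) (Y u))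
              (W u (Yd a) - W a (Yd a))) := by
    simp only [midpointGerm]
    rw [← hrp.chen ha hu hb]
    abel
  have hT1 := norm_taylor_defect_le hrp hY hβ hNW hNWW ha hb hab
  have hT2 := norm_WW_midpoint_sub_le hrp hY hβ hNWW ha hu (by linarith)
  have hT3 := norm_WW_sub_WW_midpoint_le hrp hY hα hβ hNWW ha hu hb (by linarith) (by linarith)
  rw [show u - a = (b - a) / 2 by ring, show (b - a) / 2 / 2 = (b - a) / 4 by ring] at hT2
  rw [show u - a = (b - a) / 2 by ring, show b - u = (b - a) / 2 by ring] at hT3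
  rw [hdecomp]
  refine (norm_sub_le _ _).trans ((add_le_add_left (norm_add_le _ _) _).trans ?_)
  linarith

theorem norm_midpointGerm_defect_le (hrp : RoughPath2 T α β W WW NW NWW)
    (hY : ControlledPath T α W Y Yd MY MYd CY CYd CR) (hα : 1 / 3 ≤ α) (hβ : 0 ≤ β 1)
    (hNW : 0 ≤ NW) (hNWW : 0 ≤ NWW) (ha : a ∈ Icc 0 T) (hb : b ∈ Icc 0 T) (hab : a ≤ b) :
    ‖midpointGerm W WW Y Yd a b - midpointGerm W WW Y Yd a ((a + b) / 2)
        - midpointGerm W WW Y Yd ((a + b) / 2) b‖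
      ≤ growthWeight β MYd MY * (NW + NWW) * (CY + CYd + CR) * (b - a) ^ (3 * α) := by
  refine (norm_midpointGerm_defect_le_rpow hrp hY (by linarith) hβ hNW hNWW ha hb hab).trans ?_
  obtain ⟨hCY, hCYd, hCR⟩ := hY.holder_nonneg
  have hK0 := hY.growthWeight_nonneg hβ ha
  have hh : 0 ≤ b - a := by linarith
  have hpow : ∀ z : ℝ, 0 ≤ z → ∀ n : ℕ, z ^ (n * α) = (z ^ α) ^ n := fun z hz n => by
    rw [mul_comm, Real.rpow_mul_natCast hz]
  have hhalf : ((b - a) / 2) ^ α = (1 / 2) ^ α * (b - a) ^ α := by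
    rw [div_eq_mul_one_div, mul_comm, Real.mul_rpow (by norm_num) hh]
  have hquarter : ((b - a) / 4) ^ α = ((1 / 2) ^ α) ^ 2 * (b - a) ^ α := by
    rw [show (b - a) / 4 = 1 / 2 * ((b - a) / 2) by ring, Real.mul_rpow (by norm_num) (by linarith),
      hhalf]
    ring
  rw [show 2 * α = (2 : ℕ) * α by norm_num, show 3 * α = (3 : ℕ) * α by norm_num, hpow _ hh,
    hpow _ (by linarith), hpow _ hh, hhalf, hquarter]
  have hx := one_half_rpow_le_four_fifths hα
  set K := growthWeight β MYd MY
  set x : ℝ := (1 / 2) ^ α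
  set A : ℝ := (b - a) ^ α
  have hA : 0 ≤ A := by positivity
  have hx0 : 0 ≤ x := by positivity
  have hcoeff : (1 + 2 * x ^ 2) * x / 4 + x ^ 4 / 2 + x ^ 2 / 2 ≤ 1 := by
    nlinarith [mul_nonneg hx0 hx0, mul_nonneg (mul_nonneg hx0 hx0) hx0]
  have hx3 : x ^ 3 ≤ 1 := pow_le_one₀ hx0 (by linarith)
  calc _ = K * A ^ 3 * (NWW * CY * ((1 + 2 * x ^ 2) * x / 4 + x ^ 4 / 2 + x ^ 2 / 2)
          + NWW * CYd * x ^ 3 + NW * CR * x ^ 3) := by ring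
    _ ≤ K * A ^ 3 * (NWW * CY * 1 + NWW * CYd * 1 + NW * CR * 1) := by gcongr
    _ ≤ K * (NW + NWW) * (CY + CYd + CR) * A ^ 3 := by
        have : 0 ≤ K * A ^ 3 * (NW * CY + NW * CYd + NWW * CR) := by positivity
        nlinarith

theorem norm_midpointGerm_sub_riemannGerm_le (hrp : RoughPath2 T α β W WW NW NWW)
    (hY : ControlledPath T α W Y Yd MY MYd CY CYd CR) (hα : 0 < α) (hβ : 0 ≤ β 1)
    (hNWW : 0 ≤ NWW) (ha : a ∈ Icc 0 T) (hb : b ∈ Icc 0 T) (hab : a ≤ b) :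
    ‖midpointGerm W WW Y Yd a b - riemannGerm W WW Y Yd a b‖
      ≤ NWW * growthWeight β MYd MY * CY * (b - a) ^ (3 * α) := by
  have hm := midpoint_mem_Icc ha hb
  have hdist : ‖midpoint ℝ (Y a) (Y ((a + b) / 2)) - Y a‖ ≤ CY * (b - a) ^ α := by
    rw [← dist_eq_norm, dist_midpoint_left, Real.norm_two]
    calc 2⁻¹ * dist (Y a) (Y ((a + b) / 2)) ≤ dist (Y a) (Y ((a + b) / 2)) := by
          linarith [dist_nonneg (x := Y a) (y := Y ((a + b) / 2))]
      _ ≤ CY * ((a + b) / 2 - a) ^ α := by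
          rw [dist_comm, dist_eq_norm]; exact hY.holder_of_le ha hm (by linarith)
      _ ≤ CY * (b - a) ^ α := by gcongr <;> linarith [hY.holder_nonneg.1]
  have hK0 := hY.growthWeight_nonneg hβ ha
  calc ‖midpointGerm W WW Y Yd a b - riemannGerm W WW Y Yd a b‖
      = ‖WW a b (Yd a, midpoint ℝ (Y a) (Y ((a + b) / 2))) - WW a b (Yd a, Y a)‖ := by
        simp only [midpointGerm, riemannGerm, add_sub_add_left_eq_sub]
    _ ≤ NWW * |b - a| ^ (2 * α) * growthWeight β MYd MY * (CY * (b - a) ^ α) :=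
        (hrp.norm_WW_sub_le_right hβ hNWW ha hb (hY.norm_deriv_le a ha) (hY.norm_le a ha)
          (norm_midpoint_le_of_le (hY.norm_le a ha) (hY.norm_le _ hm))).trans (by gcongr)
    _ = NWW * growthWeight β MYd MY * CY * (b - a) ^ (3 * α) := by
        rw [abs_of_nonneg (by linarith), show 3 * α = 2 * α + α by ring,
          Real.rpow_add' (by linarith) (by linarith)]
        ring

theorem norm_WW_midpoint_le (hrp : RoughPath2 T α β W WW NW NWW)
    (hY : ControlledPath T α W Y Yd MY MYd CY CYd CR) (hβ₀ : 0 ≤ β 0) (hβ₁ : 0 ≤ β 1)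
    (hNWW : 0 ≤ NWW) (hs : s ∈ Icc 0 T) (ht : t ∈ Icc 0 T) (hst : s ≤ t) :
    ‖WW s t (Yd s, midpoint ℝ (Y s) (Y ((s + t) / 2)))‖
      ≤ NWW * (t - s) ^ (2 * α) * growthWeight β MYd MY := by
  refine (hrp.norm_WW_le hs ht _ _).trans ?_
  rw [abs_of_nonneg (sub_nonneg.2 hst), mul_assoc]
  gcongr
  exact rpow_mul_rpow_le_growthWeight hβ₀ hβ₁ (norm_nonneg _) (hY.norm_deriv_le s hs)
    (norm_nonneg _)
    (norm_midpoint_le_of_le (hY.norm_le s hs) (hY.norm_le _ (midpoint_mem_Icc hs ht)))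

theorem norm_sub_midpointGerm_le (hrp : RoughPath2 T α β W WW NW NWW)
    (hY : ControlledPath T α W Y Yd MY MYd CY CYd CR) (hα : 1 / 3 < α) (hβ : 0 ≤ β 1)
    (hNW : 0 ≤ NW) (hNWW : 0 ≤ NWW) {Z : ℝ → V}
    (hZ : ∀ t ∈ Icc 0 T, HasPartitionLimit (riemannGerm W WW Y Yd) 0 t (Z t))
    (hs : s ∈ Icc 0 T) (ht : t ∈ Icc 0 T) (hst : s < t) :
    ‖Z t - Z s - midpointGerm W WW Y Yd s t‖
      ≤ (1 - 2 ^ (1 - 3 * α))⁻¹ * (growthWeight β MYd MY * (NW + NWW) * (CY + CYd + CR))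
          * (t - s) ^ (3 * α) := by
  obtain ⟨hCY, hCYd, hCR⟩ := hY.holder_nonneg
  have hK0 := hY.growthWeight_nonneg hβ hs
  have hmem : ∀ r ∈ Icc s t, r ∈ Icc 0 T := fun r hr => ⟨hs.1.trans hr.1, hr.2.trans ht.2⟩
  exact ((hZ s hs).sub (hZ t ht) hs.1).norm_sub_le hst (by linarith) (by positivity)
    (fun a ha b hb hab => norm_midpointGerm_sub_riemannGerm_le hrp hY (by linarith) hβ hNWW
      (hmem a ha) (hmem b hb) hab)
    (fun a ha b hb hab => norm_midpointGerm_defect_le hrp hY hα.le hβ hNW hNWW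
      (hmem a ha) (hmem b hb) hab)

theorem norm_remainder_le (hrp : RoughPath2 T α β W WW NW NWW)
    (hY : ControlledPath T α W Y Yd MY MYd CY CYd CR) (hα : 1 / 3 < α) (hβ₀ : 0 ≤ β 0)
    (hβ₁ : 0 ≤ β 1) (hNW : 0 ≤ NW) (hNWW : 0 ≤ NWW) {Z : ℝ → V}
    (hZ : ∀ t ∈ Icc 0 T, HasPartitionLimit (riemannGerm W WW Y Yd) 0 t (Z t))
    (hs : s ∈ Icc 0 T) (ht : t ∈ Icc 0 T) (hst : s ≤ t) :
    ‖Z t - Z s - (W t (Y s) - W s (Y s))‖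
      ≤ (1 - 2 ^ (1 - 3 * α))⁻¹ * (NW + NWW) * growthWeight β (2 * MYd) (2 * MY)
          * (1 + T ^ α * (CY + CYd + CR)) * (t - s) ^ (2 * α) := by
  rcases hst.eq_or_lt with rfl | hlt
  · simp [Real.zero_rpow (by linarith : 2 * α ≠ 0)]
  obtain ⟨hCY, hCYd, hCR⟩ := hY.holder_nonneg
  have hMY := (norm_nonneg _).trans (hY.norm_le s hs)
  have hMYd := (norm_nonneg _).trans (hY.norm_deriv_le s hs)
  have hK : growthWeight β MYd MY ≤ growthWeight β (2 * MYd) (2 * MY) :=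
    growthWeight_le_growthWeight hβ₁ hMYd (by linarith) hMY (by linarith)
  have hK0 := hY.growthWeight_nonneg hβ₁ hs
  have hk := one_le_inv_one_sub_two_rpow (by linarith : 1 < 3 * α)
  have hK₂0 := hK0.trans hK
  have hk0 := zero_le_one.trans hk
  have hNWWk : NWW ≤ (1 - 2 ^ (1 - 3 * α))⁻¹ * (NW + NWW) :=
    (le_add_of_nonneg_left hNW).trans (le_mul_of_one_le_left (add_nonneg hNW hNWW) hk)
  have h3α : (t - s) ^ (3 * α) ≤ (t - s) ^ (2 * α) * T ^ α := by
    rw [show 3 * α = 2 * α + α by ring]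
    exact rpow_add_le_mul_rpow (by linarith) (by linarith [hs.1, ht.2]) (by linarith) (by linarith)
  calc ‖Z t - Z s - (W t (Y s) - W s (Y s))‖
      = ‖(Z t - Z s - midpointGerm W WW Y Yd s t)
          + WW s t (Yd s, midpoint ℝ (Y s) (Y ((s + t) / 2)))‖ := by
        simp only [midpointGerm]; congr 1; abel
    _ ≤ (1 - 2 ^ (1 - 3 * α))⁻¹ * (growthWeight β MYd MY * (NW + NWW) * (CY + CYd + CR))
          * (t - s) ^ (3 * α) + NWW * (t - s) ^ (2 * α) * growthWeight β MYd MY :=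
        (norm_add_le _ _).trans (add_le_add
          (norm_sub_midpointGerm_le hrp hY hα hβ₁ hNW hNWW hZ hs ht hlt)
          (norm_WW_midpoint_le hrp hY hβ₀ hβ₁ hNWW hs ht hst))
    _ ≤ (1 - 2 ^ (1 - 3 * α))⁻¹
            * (growthWeight β (2 * MYd) (2 * MY) * (NW + NWW) * (CY + CYd + CR))
            * ((t - s) ^ (2 * α) * T ^ α)
          + (1 - 2 ^ (1 - 3 * α))⁻¹ * (NW + NWW) * (t - s) ^ (2 * α)
            * growthWeight β (2 * MYd) (2 * MY) := by
        gcongr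
    _ = _ := by ring

theorem exists_holder_of_remainder_le {E : Type*} [NormedAddCommGroup E] {Z : ℝ → E}
    {A : ℝ → ℝ → E} {T α C C' : ℝ} (hα : 0 < α)
    (hrem : ∀ s ∈ Icc 0 T, ∀ t ∈ Icc 0 T, s ≤ t → ‖Z t - Z s - A s t‖ ≤ C * (t - s) ^ (2 * α))
    (hA : ∀ s ∈ Icc 0 T, ∀ t ∈ Icc 0 T, ‖A s t‖ ≤ C' * |t - s| ^ α) :
    ∃ CZ : ℝ, ∀ s ∈ Icc 0 T, ∀ t ∈ Icc 0 T, ‖Z t - Z s‖ ≤ CZ * |t - s| ^ α := by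
  have hle : ∀ s ∈ Icc 0 T, ∀ t ∈ Icc 0 T, s ≤ t →
      ‖Z t - Z s‖ ≤ (|C| * T ^ α + C') * |t - s| ^ α := fun s hs t ht hst => by
    have hts : 0 ≤ t - s := sub_nonneg.2 hst
    have h2α : (t - s) ^ (2 * α) ≤ (t - s) ^ α * T ^ α := by
      rw [two_mul]
      exact rpow_add_le_mul_rpow hts (by linarith [hs.1, ht.2]) hα.le (by linarith)
    rw [abs_of_nonneg hts]
    calc ‖Z t - Z s‖ ≤ ‖Z t - Z s - A s t‖ + ‖A s t‖ := norm_le_norm_sub_add _ _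
      _ ≤ |C| * ((t - s) ^ α * T ^ α) + C' * (t - s) ^ α := by
        refine add_le_add ((hrem s hs t ht hst).trans ?_)
          (by simpa [abs_of_nonneg hts] using hA s hs t ht)
        exact (mul_le_mul_of_nonneg_right (le_abs_self C) (by positivity)).trans (by gcongr)
      _ = _ := by ring
  refine ⟨|C| * T ^ α + C', fun s hs t ht => ?_⟩
  rcases le_total s t with hst | hts
  · exact hle s hs t ht hst
  · simpa [norm_sub_rev, abs_sub_comm] using hle t ht s hs hts

end Integral

theorem stmt_7_general
    (T α : ℝ) (hT : 0 < T) (hα1 : 1 / 3 < α)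
    (β : ℕ → ℝ) (hβ : ∀ k ≤ 2, 0 ≤ β k)
    (W : ℝ → V → V) (WW : ℝ → ℝ → V × V → V) (NW NWW : ℝ)
    (hNW : 0 ≤ NW) (hNWW : 0 ≤ NWW)
    (hrp : RoughPath2 T α β W WW NW NWW)
    (Y Yd : ℝ → V) (MY MYd CY CYd CR : ℝ)
    (hMY : ∀ t ∈ Icc (0 : ℝ) T, ‖Y t‖ ≤ MY)
    (hMYd : ∀ t ∈ Icc (0 : ℝ) T, ‖Yd t‖ ≤ MYd)
    (hCY : ∀ s ∈ Icc (0 : ℝ) T, ∀ t ∈ Icc (0 : ℝ) T, ‖Y t - Y s‖ ≤ CY * |t - s| ^ α)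
    (hCYd : ∀ s ∈ Icc (0 : ℝ) T, ∀ t ∈ Icc (0 : ℝ) T, ‖Yd t - Yd s‖ ≤ CYd * |t - s| ^ α)
    (hCR : ∀ s ∈ Icc (0 : ℝ) T, ∀ t ∈ Icc (0 : ℝ) T,
      ‖Y t - Y s - (W t (Yd s) - W s (Yd s))‖ ≤ CR * |t - s| ^ (2 * α))
    (Z : ℝ → V)
    (hZ : ∀ t ∈ Icc (0 : ℝ) T, ∀ ε > (0 : ℝ), ∃ δ > (0 : ℝ), ∀ P : TimePartition 0 t,
      (∀ k < P.n, P.pts (k + 1) - P.pts k < δ) → ‖riemannSum W WW Y Yd P - Z t‖ ≤ ε) :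
    (∃ CZ : ℝ, ∀ s ∈ Icc (0 : ℝ) T, ∀ t ∈ Icc (0 : ℝ) T, ‖Z t - Z s‖ ≤ CZ * |t - s| ^ α) ∧
    (∀ s ∈ Icc (0 : ℝ) T, ∀ t ∈ Icc (0 : ℝ) T, s ≤ t →
      ‖Z t - Z s - (W t (Y s) - W s (Y s))‖
        ≤ (1 - (2 : ℝ) ^ (1 - 3 * α))⁻¹ * (NW + NWW) * (1 + 2 * MYd) ^ (max (β 0) (β 1))
            * (1 + 2 * MY) ^ (max (β 1) (β 2)) * (1 + T ^ α * (CY + CYd + CR))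
            * |t - s| ^ (2 * α)) := by
  have h0 : (0 : ℝ) ∈ Icc 0 T := ⟨le_rfl, hT.le⟩
  have hT' : T ∈ Icc 0 T := ⟨hT.le, le_rfl⟩
  have hnonneg : ∀ {C γ : ℝ} {x : V}, ‖x‖ ≤ C * |T - 0| ^ γ → 0 ≤ C := fun h =>
    nonneg_of_mul_nonneg_left ((norm_nonneg _).trans h)
      (by rw [sub_zero, abs_of_pos hT]; exact Real.rpow_pos_of_pos hT _)
  have hY : ControlledPath T α W Y Yd MY MYd CY CYd CR := ⟨hMY, hMYd, hCY, hCYd, hCR,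
    hnonneg (hCY 0 h0 T hT'), hnonneg (hCYd 0 h0 T hT'), hnonneg (hCR 0 h0 T hT')⟩
  have hβ₀ := hβ 0 (by norm_num)
  have hrem := fun s hs t ht hst =>
    norm_remainder_le hrp hY hα1 hβ₀ (hβ 1 (by norm_num)) hNW hNWW hZ (s := s) (t := t) hs ht hst
  refine ⟨exists_holder_of_remainder_le (by linarith) hrem (C' := NW * (1 + MY) ^ β 0)
    fun s hs t ht => ?_, fun s hs t ht hst => (hrem s hs t ht hst).trans_eq ?_⟩
  · calc ‖W t (Y s) - W s (Y s)‖ ≤ NW * |t - s| ^ α * (1 + ‖Y s‖) ^ β 0 :=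
          hrp.norm_W_sub_le hs ht _
      _ ≤ NW * |t - s| ^ α * (1 + MY) ^ β 0 := by gcongr; exact hMY s hs
      _ = NW * (1 + MY) ^ β 0 * |t - s| ^ α := by ring
  · rw [abs_of_nonneg (sub_nonneg.2 hst), growthWeight]
    ring

/-- Proposition 3.1: the nonlinear rough integral `Z_t = ∫₀ᵗ W(dr, Y_r)` is controlled by `W`
with Gubinelli derivative `Y`, i.e. `(Z, Y) ∈ 𝓔_W^{2α}`, and its remainder
`R^Z_{s,t} = Z_t - Z_s - W_{s,t}(Y_s)` satisfies the explicit bound (3.22). -/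
theorem stmt_7
    (T α : ℝ) (hT : 0 < T) (hα1 : 1 / 3 < α) (hα2 : α ≤ 1 / 2)
    (β : ℕ → ℝ) (hβ : ∀ k ≤ 2, 0 ≤ β k)
    (W : ℝ → V → V) (WW : ℝ → ℝ → V × V → V) (NW NWW : ℝ)
    (hNW : 0 ≤ NW) (hNWW : 0 ≤ NWW)
    (hrp : RoughPath2 T α β W WW NW NWW)
    (Y Yd : ℝ → V) (MY MYd CY CYd CR : ℝ)
    (hMY : ∀ t ∈ Icc (0 : ℝ) T, ‖Y t‖ ≤ MY)
    (hMYd : ∀ t ∈ Icc (0 : ℝ) T, ‖Yd t‖ ≤ MYd)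
    (hCY : ∀ s ∈ Icc (0 : ℝ) T, ∀ t ∈ Icc (0 : ℝ) T, ‖Y t - Y s‖ ≤ CY * |t - s| ^ α)
    (hCYd : ∀ s ∈ Icc (0 : ℝ) T, ∀ t ∈ Icc (0 : ℝ) T, ‖Yd t - Yd s‖ ≤ CYd * |t - s| ^ α)
    (hCR : ∀ s ∈ Icc (0 : ℝ) T, ∀ t ∈ Icc (0 : ℝ) T,
      ‖Y t - Y s - (W t (Yd s) - W s (Yd s))‖ ≤ CR * |t - s| ^ (2 * α))
    (Z : ℝ → V)
    (hZ : ∀ t ∈ Icc (0 : ℝ) T, ∀ ε > (0 : ℝ), ∃ δ > (0 : ℝ), ∀ P : TimePartition 0 t,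
      (∀ k < P.n, P.pts (k + 1) - P.pts k < δ) → ‖riemannSum W WW Y Yd P - Z t‖ ≤ ε) :
    (∃ CZ : ℝ, ∀ s ∈ Icc (0 : ℝ) T, ∀ t ∈ Icc (0 : ℝ) T, ‖Z t - Z s‖ ≤ CZ * |t - s| ^ α) ∧
    (∀ s ∈ Icc (0 : ℝ) T, ∀ t ∈ Icc (0 : ℝ) T, s ≤ t →
      ‖Z t - Z s - (W t (Y s) - W s (Y s))‖
        ≤ (1 - (2 : ℝ) ^ (1 - 3 * α))⁻¹ * (NW + NWW) * (1 + 2 * MYd) ^ (max (β 0) (β 1))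
            * (1 + 2 * MY) ^ (max (β 1) (β 2)) * (1 + T ^ α * (CY + CYd + CR))
            * |t - s| ^ (2 * α)) :=
  stmt_7_general T α hT hα1 β hβ W WW NW NWW hNW hNWW hrp Y Yd MY MYd CY CYd CR hMY hMYd hCY hCYd
    hCR Z hZ
end

section
/- Let X ∈ C^α([0,T];V) and let f : V×V → V have continuous mixed partial Fréchet derivatives D₂^k D₁^j f for 0 ≤ j ≤ 3, 0 ≤ k ≤ 1, with ‖f‖_{K,3,β₁} := Σ_{j=0}^3 Σ_{k=0}^1 sup_{x∈K,y∈V} ‖D₂^kD₁^j f(x,y)‖/(1+‖y‖_V)^{β_k} < ∞ for K the closed convex hull of {X_t : t∈[0,T]}. Set W(t,x) := f(X_t,x), and let (Y,Ẏ) ∈ 𝓔_W^{2α} be a nonlinear controlled rough path of W. Define Y'_t := D₁f(X_t, Ẏ_t) ∈ L(V;V). Then (Y,Y') is a (linear) controlled rough path of X: Y' is α-Hölder as a map [0,T] → L(V;V), and the remainder R̃^Y_{s,t} := Y_t − Y_s − Y'_s(X_t − X_s) has finite 2α-Hölder seminorm; explicitly, ‖R̃^Y‖_{2α} ≤ (1/2)‖f‖_{K,3,β₁}(1+‖Ẏ‖_∞)^{β₀}‖X‖_α²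 + ‖R^Y‖_{2α}. -/
/-!
Let `B = closedBall 0 ‖Ẏ‖_∞`. On the convex set `K × B` the partial derivative `D₁f` is Lipschitz
in each variable, with constants `sup ‖D₁²f‖` and `sup ‖D₂D₁f‖ = sup ‖D₁D₂f‖` (symmetry of the
second derivative of the jointly `C²` map `f`), both controlled by the weighted bounds on `f`;
composing with the α-Hölder paths `X` and `Ẏ` makes `Y'` α-Hölder. For the remainder,
`R̃^Y_{s,t} = R^Y_{s,t} + (f(X_t, Ẏ_s) - f(X_s, Ẏ_s) - D₁f(X_s, Ẏ_s)(X_t - X_s))`, and the second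
term is a Taylor remainder along the segment `[X_s, X_t] ⊆ K`, of norm at most
`½ sup_K ‖D₁²f(·, Ẏ_s)‖ ‖X_t - X_s‖²`.
-/

open Set

section Taylor

variable {E G : Type*} [NormedAddCommGroup E] [NormedSpace ℝ E]
  [NormedAddCommGroup G] [NormedSpace ℝ G]

theorem Convex.norm_image_sub_sub_le_of_lipschitz_deriv {f : E → G} {f' : E → E →L[ℝ] G}
    {s : Set E} (hs : Convex ℝ s) (hf : ∀ u ∈ s, HasFDerivAt f (f' u) u) {C : ℝ} {x y : E}
    (hx : x ∈ s) (hy : y ∈ s) (hC : ∀ u ∈ s, ‖f' u - f' x‖ ≤ C * ‖u - x‖) :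
    ‖f y - f x - f' x (y - x)‖ ≤ C / 2 * ‖y - x‖ ^ 2 := by
  set v := y - x
  have hseg : ∀ θ ∈ Icc (0 : ℝ) 1, x + θ • v ∈ s := fun θ hθ => hs.add_smul_sub_mem hx hy hθ
  have hderiv : ∀ θ ∈ Icc (0 : ℝ) 1, HasDerivAt (fun θ : ℝ => f (x + θ • v) - f x - θ • f' x v)
      (f' (x + θ • v) v - f' x v) θ := by
    intro θ hθ
    have hline : HasDerivAt (fun θ : ℝ => x + θ • v) v θ := by
      simpa using ((hasDerivAt_id θ).smul_const v).const_add x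
    exact ((((hf _ (hseg θ hθ)).comp_hasDerivAt θ hline).sub_const (f x)).sub
      ((hasDerivAt_id θ).smul_const (f' x v))).congr_deriv (by simp)
  have hbound : ∀ θ ∈ Ico (0 : ℝ) 1, ‖f' (x + θ • v) v - f' x v‖ ≤ C * ‖v‖ ^ 2 * θ := by
    intro θ hθ
    calc ‖f' (x + θ • v) v - f' x v‖ ≤ ‖f' (x + θ • v) - f' x‖ * ‖v‖ := by
          rw [← sub_apply]; exact ContinuousLinearMap.le_opNorm _ _
      _ ≤ C * ‖x + θ • v - x‖ * ‖v‖ := by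
          gcongr; exact hC _ (hseg θ (Ico_subset_Icc_self hθ))
      _ = C * ‖v‖ ^ 2 * θ := by
          rw [add_sub_cancel_left, norm_smul, Real.norm_of_nonneg hθ.1]; ring
  -- compare with the parabola θ ↦ C ‖v‖² θ² / 2, whose derivative dominates the one above
  have key := image_norm_le_of_norm_deriv_right_le_deriv_boundary
    (fun θ hθ => (hderiv θ hθ).continuousAt.continuousWithinAt)
    (fun θ hθ => (hderiv θ (Ico_subset_Icc_self hθ)).hasDerivWithinAt)
    (B := fun θ => C * ‖v‖ ^ 2 / 2 * θ ^ 2) (by simp)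
    (fun θ => ((hasDerivAt_pow 2 θ).const_mul (C * ‖v‖ ^ 2 / 2)).congr_deriv (by ring))
    hbound (right_mem_Icc.2 zero_le_one)
  calc ‖f y - f x - f' x (y - x)‖ = ‖f (x + (1 : ℝ) • v) - f x - (1 : ℝ) • f' x v‖ := by simp [v]
    _ ≤ C * ‖v‖ ^ 2 / 2 * 1 ^ 2 := key
    _ = C / 2 * ‖y - x‖ ^ 2 := by ring

theorem Convex.norm_image_sub_sub_fderiv_le {f : E → G} {s : Set E} (hs : Convex ℝ s)
    (hf : ContDiff ℝ 2 f) {C : ℝ} (hC : ∀ u ∈ s, ‖fderiv ℝ (fderiv ℝ f) u‖ ≤ C) {x y : E}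
    (hx : x ∈ s) (hy : y ∈ s) :
    ‖f y - f x - fderiv ℝ f x (y - x)‖ ≤ C / 2 * ‖y - x‖ ^ 2 := by
  have hdf : Differentiable ℝ (fderiv ℝ f) :=
    (hf.fderiv_right (m := 1) (by norm_num)).differentiable (by norm_num)
  exact hs.norm_image_sub_sub_le_of_lipschitz_deriv
    (fun u _ => (hf.differentiable (by norm_num) u).hasFDerivAt) hx hy
    fun u hu => hs.norm_image_sub_le_of_norm_fderiv_le (fun w _ => hdf w) hC hx hu

theorem Convex.norm_sub_sub_fderiv_le_rpow {h : E → G} {s : Set E} (hs : Convex ℝ s)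
    (hh : ContDiff ℝ 2 h) {A : ℝ} (hA : ∀ u ∈ s, ‖fderiv ℝ (fderiv ℝ h) u‖ ≤ A) {x x' : E}
    (hx : x ∈ s) (hx' : x' ∈ s) {z z' : G} {r α Cx CR : ℝ} (hxx' : ‖x' - x‖ ≤ Cx * r ^ α)
    (hzz' : ‖z' - z - (h x' - h x)‖ ≤ CR * r ^ (2 * α)) (hr : 0 ≤ r) :
    ‖z' - z - fderiv ℝ h x (x' - x)‖ ≤ (A / 2 * Cx ^ 2 + CR) * r ^ (2 * α) := by
  have hA0 : 0 ≤ A := le_trans (by positivity) (hA x hx)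
  calc _ = ‖(z' - z - (h x' - h x)) + (h x' - h x - fderiv ℝ h x (x' - x))‖ := by
        congr 1; abel
    _ ≤ CR * r ^ (2 * α) + A / 2 * ‖x' - x‖ ^ 2 :=
        norm_add_le_of_le hzz' (hs.norm_image_sub_sub_fderiv_le hh hA hx hx')
    _ ≤ CR * r ^ (2 * α) + A / 2 * (Cx * r ^ α) ^ 2 := by gcongr
    _ = (A / 2 * Cx ^ 2 + CR) * r ^ (2 * α) := by
        rw [mul_pow, mul_comm 2 α, Real.rpow_mul hr, Real.rpow_two]; ring

end Taylor

section Partial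

variable {E₁ E₂ G : Type*} [NormedAddCommGroup E₁] [NormedSpace ℝ E₁]
  [NormedAddCommGroup E₂] [NormedSpace ℝ E₂] [NormedAddCommGroup G] [NormedSpace ℝ G]
  {f : E₁ → E₂ → G}

theorem ContDiff.hasFDerivAt_fderiv_partial_fst
    (hf : ContDiff ℝ 2 (fun p : E₁ × E₂ => f p.1 p.2)) (x : E₁) (y : E₂) :
    HasFDerivAt (fun y' => fderiv ℝ (fun x' => f x' y') x)
      (fderiv ℝ (fun x' => fderiv ℝ (fun y' => f x' y') y) x).flip y := by
  set g : E₁ × E₂ → G := fun p => f p.1 p.2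
  have hg : ∀ p, HasFDerivAt g (fderiv ℝ g p) p :=
    fun p => (hf.differentiable (by norm_num) p).hasFDerivAt
  have hg' : ∀ p, HasFDerivAt (fderiv ℝ g) (fderiv ℝ (fderiv ℝ g) p) p :=
    fun p => ((hf.fderiv_right (m := 1) (by norm_num)).differentiable (by norm_num) p).hasFDerivAt
  have hfst : ∀ x' y', fderiv ℝ (fun x'' => f x'' y') x' =
      (fderiv ℝ g (x', y')).comp (.inl ℝ E₁ E₂) :=
    fun x' y' => ((hg _).comp x' (hasFDerivAt_prodMk_left x' y')).fderiv
  have hsnd : ∀ x' y', fderiv ℝ (fun y'' => f x' y'') y' =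
      (fderiv ℝ g (x', y')).comp (.inr ℝ E₁ E₂) :=
    fun x' y' => ((hg _).comp y' (hasFDerivAt_prodMk_right x' y')).fderiv
  have hy := HasFDerivAt.clm_comp ((hg' (x, y)).comp y (hasFDerivAt_prodMk_right x y))
    (hasFDerivAt_const (ContinuousLinearMap.inl ℝ E₁ E₂) y)
  have hx := HasFDerivAt.clm_comp
    ((hg' (x, y)).comp x (hasFDerivAt_prodMk_left (𝕜 := ℝ) x y))
    (hasFDerivAt_const (ContinuousLinearMap.inr ℝ E₁ E₂) x)
  simp only [hfst, hsnd]
  simp only [Function.comp_def] at hx hy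
  rw [hx.fderiv]
  convert hy using 1
  ext k h
  simpa using (hf.contDiffAt.isSymmSndFDerivAt (by simp)) (h, 0) (0, k)

theorem ContDiff.norm_fderiv_partial_fst_sub_le
    (hf : ContDiff ℝ 2 (fun p : E₁ × E₂ => f p.1 p.2)) {s : Set E₁} {t : Set E₂}
    (hs : Convex ℝ s) (ht : Convex ℝ t) {A B : ℝ}
    (hA : ∀ x ∈ s, ∀ y ∈ t, ‖fderiv ℝ (fderiv ℝ (fun x' => f x' y)) x‖ ≤ A)
    (hB : ∀ x ∈ s, ∀ y ∈ t, ‖fderiv ℝ (fun x' => fderiv ℝ (fun y' => f x' y') y) x‖ ≤ B)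
    {x x' : E₁} {y y' : E₂} (hx : x ∈ s) (hx' : x' ∈ s) (hy : y ∈ t) (hy' : y' ∈ t) :
    ‖fderiv ℝ (fun u => f u y') x' - fderiv ℝ (fun u => f u y) x‖ ≤
      A * ‖x' - x‖ + B * ‖y' - y‖ := by
  have hfst : ContDiff ℝ 2 (fun u => f u y') :=
    hf.comp (contDiff_id.prodMk contDiff_const)
  have hx_var : ‖fderiv ℝ (fun u => f u y') x' - fderiv ℝ (fun u => f u y') x‖ ≤ A * ‖x' - x‖ :=
    hs.norm_image_sub_le_of_norm_fderiv_le
      (fun u _ => (hfst.fderiv_right (m := 1) (by norm_num)).differentiable (by norm_num) u)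
      (fun u hu => hA u hu y' hy') hx hx'
  have hy_var : ‖fderiv ℝ (fun u => f u y') x - fderiv ℝ (fun u => f u y) x‖ ≤ B * ‖y' - y‖ :=
    ht.norm_image_sub_le_of_norm_fderiv_le
      (fun v _ => (hf.hasFDerivAt_fderiv_partial_fst x v).differentiableAt)
      (fun v hv => by
        rw [(hf.hasFDerivAt_fderiv_partial_fst x v).fderiv, ContinuousLinearMap.opNorm_flip]
        exact hB x hx v hv) hy hy'
  calc _ = ‖(fderiv ℝ (fun u => f u y') x' - fderiv ℝ (fun u => f u y') x) +
        (fderiv ℝ (fun u => f u y') x - fderiv ℝ (fun u => f u y) x)‖ := by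
        rw [sub_add_sub_cancel]
    _ ≤ A * ‖x' - x‖ + B * ‖y' - y‖ := norm_add_le_of_le hx_var hy_var

theorem ContDiff.norm_fderiv_partial_fst_comp_sub_le_rpow
    (hf : ContDiff ℝ 2 (fun p : E₁ × E₂ => f p.1 p.2)) {s : Set E₁} {t : Set E₂}
    (hs : Convex ℝ s) (ht : Convex ℝ t) {A B : ℝ}
    (hA : ∀ x ∈ s, ∀ y ∈ t, ‖fderiv ℝ (fderiv ℝ (fun x' => f x' y)) x‖ ≤ A)
    (hB : ∀ x ∈ s, ∀ y ∈ t, ‖fderiv ℝ (fun x' => fderiv ℝ (fun y' => f x' y') y) x‖ ≤ B)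
    {I : Set ℝ} {x : ℝ → E₁} {y : ℝ → E₂} (hxs : MapsTo x I s) (hyt : MapsTo y I t)
    {α Cx Cy : ℝ} (hx : ∀ a ∈ I, ∀ b ∈ I, ‖x b - x a‖ ≤ Cx * |b - a| ^ α)
    (hy : ∀ a ∈ I, ∀ b ∈ I, ‖y b - y a‖ ≤ Cy * |b - a| ^ α) {a b : ℝ} (ha : a ∈ I) (hb : b ∈ I) :
    ‖fderiv ℝ (fun u => f u (y b)) (x b) - fderiv ℝ (fun u => f u (y a)) (x a)‖ ≤
      (A * Cx + B * Cy) * |b - a| ^ α := by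
  have hA0 : 0 ≤ A := le_trans (by positivity) (hA _ (hxs ha) _ (hyt ha))
  have hB0 : 0 ≤ B := le_trans (by positivity) (hB _ (hxs ha) _ (hyt ha))
  calc _ ≤ A * ‖x b - x a‖ + B * ‖y b - y a‖ :=
        hf.norm_fderiv_partial_fst_sub_le hs ht hA hB (hxs ha) (hxs hb) (hyt ha) (hyt hb)
    _ ≤ A * (Cx * |b - a| ^ α) + B * (Cy * |b - a| ^ α) := by
        gcongr
        exacts [hx a ha b hb, hy a ha b hb]
    _ = (A * Cx + B * Cy) * |b - a| ^ α := by ring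

end Partial

theorem mul_one_add_norm_rpow_le {E : Type*} [SeminormedAddCommGroup E] {N β M : ℝ} {y : E}
    (hN : 0 ≤ N) (hβ : 0 ≤ β) (hy : y ∈ Metric.closedBall 0 M) :
    N * (1 + ‖y‖) ^ β ≤ N * (1 + M) ^ β := by
  gcongr
  simpa using hy

theorem stmt_15_general {V : Type*} [NormedAddCommGroup V] [NormedSpace ℝ V]
    (T α β₀ β₁ : ℝ)
    (hβ₀ : 0 ≤ β₀) (hβ₁ : 0 ≤ β₁)
    (X : ℝ → V) (CX : ℝ)
    (hX : ∀ s ∈ Icc (0 : ℝ) T, ∀ t ∈ Icc (0 : ℝ) T, ‖X t - X s‖ ≤ CX * |t - s| ^ α)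
    (F : V → V → V)
    (hsm : ContDiff ℝ 4 (fun p : V × V => F p.1 p.2))
    (Nf : ℝ)
    (hf0 : ∀ j ≤ 3, ∀ u ∈ closure (convexHull ℝ (X '' Icc (0 : ℝ) T)), ∀ x : V,
      ‖iteratedFDeriv ℝ j (fun u' : V => F u' x) u‖ ≤ Nf * (1 + ‖x‖) ^ β₀)
    (hf1 : ∀ j ≤ 3, ∀ u ∈ closure (convexHull ℝ (X '' Icc (0 : ℝ) T)), ∀ x : V,
      ‖iteratedFDeriv ℝ j (fun u' : V => fderiv ℝ (fun y => F u' y) x) u‖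
        ≤ Nf * (1 + ‖x‖) ^ β₁)
    (Y Yd : ℝ → V) (MYd CYd CR : ℝ)
    (hMYd : ∀ t ∈ Icc (0 : ℝ) T, ‖Yd t‖ ≤ MYd)
    (hCYd : ∀ s ∈ Icc (0 : ℝ) T, ∀ t ∈ Icc (0 : ℝ) T, ‖Yd t - Yd s‖ ≤ CYd * |t - s| ^ α)
    (hCR : ∀ s ∈ Icc (0 : ℝ) T, ∀ t ∈ Icc (0 : ℝ) T,
      ‖Y t - Y s - (F (X t) (Yd s) - F (X s) (Yd s))‖ ≤ CR * |t - s| ^ (2 * α)) :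
    (∃ C : ℝ, ∀ s ∈ Icc (0 : ℝ) T, ∀ t ∈ Icc (0 : ℝ) T,
      ‖fderiv ℝ (fun u : V => F u (Yd t)) (X t) - fderiv ℝ (fun u : V => F u (Yd s)) (X s)‖
        ≤ C * |t - s| ^ α) ∧
    (∀ s ∈ Icc (0 : ℝ) T, ∀ t ∈ Icc (0 : ℝ) T,
      ‖Y t - Y s - fderiv ℝ (fun u : V => F u (Yd s)) (X s) (X t - X s)‖
        ≤ ((1 / 2) * Nf * (1 + MYd) ^ β₀ * CX ^ 2 + CR) * |t - s| ^ (2 * α)) := by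
  set K := closure (convexHull ℝ (X '' Icc (0 : ℝ) T))
  have hK : Convex ℝ K := (convex_convexHull ℝ _).closure
  have hXK : MapsTo X (Icc 0 T) K :=
    fun t ht => subset_closure (subset_convexHull ℝ _ ⟨t, ht, rfl⟩)
  have hYd : MapsTo Yd (Icc 0 T) (Metric.closedBall 0 MYd) :=
    fun t ht => by simpa using hMYd t ht
  have hF : ContDiff ℝ 2 (fun p : V × V => F p.1 p.2) := hsm.of_le (by norm_num)
  have hNf : ∀ u ∈ K, 0 ≤ Nf := fun u hu => by
    simpa using (norm_nonneg _).trans (hf0 0 (by norm_num) u hu 0)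
  have hA : ∀ u ∈ K, ∀ y ∈ Metric.closedBall 0 MYd,
      ‖fderiv ℝ (fderiv ℝ (fun u' => F u' y)) u‖ ≤ Nf * (1 + MYd) ^ β₀ := by
    intro u hu y hy
    rw [← norm_iteratedFDeriv_zero (𝕜 := ℝ), norm_iteratedFDeriv_fderiv,
      norm_iteratedFDeriv_fderiv]
    exact (hf0 2 (by norm_num) u hu y).trans (mul_one_add_norm_rpow_le (hNf u hu) hβ₀ hy)
  have hB : ∀ u ∈ K, ∀ y ∈ Metric.closedBall 0 MYd,
      ‖fderiv ℝ (fun u' => fderiv ℝ (fun y' => F u' y') y) u‖ ≤ Nf * (1 + MYd) ^ β₁ := by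
    intro u hu y hy
    rw [← norm_iteratedFDeriv_zero (𝕜 := ℝ), norm_iteratedFDeriv_fderiv]
    exact (hf1 1 (by norm_num) u hu y).trans (mul_one_add_norm_rpow_le (hNf u hu) hβ₁ hy)
  refine ⟨⟨_, fun s hs t ht => hF.norm_fderiv_partial_fst_comp_sub_le_rpow hK
    (convex_closedBall _ _) hA hB hXK hYd hX hCYd hs ht⟩, fun s hs t ht => ?_⟩
  refine (hK.norm_sub_sub_fderiv_le_rpow (hF.comp (contDiff_id.prodMk contDiff_const))
    (fun u hu => hA u hu _ (hYd hs)) (hXK hs) (hXK ht) (hX s hs t ht) (hCR s hs t ht)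
    (abs_nonneg _)).trans_eq ?_
  ring

/-- Lemma 5.1: if `W(t,x) = f(X_t,x)` with `f ∈ C^{3,β₁}_{loc}` and
`(Y, Ẏ) ∈ 𝓔_W^{2α}` is a nonlinear controlled rough path of `W`, then with
`Y'_t = D₁ f(X_t, Ẏ_t) ∈ L(V;V)`, the pair `(Y, Y')` is a linear controlled rough path
of `X`: `Y'` is α-Hölder and the remainder `R̃^Y_{s,t} = Y_t - Y_s - Y'_s(X_t - X_s)`
satisfies `‖R̃^Y‖_{2α} ≤ (1/2)‖f‖_{K,3,β₁}(1+‖Ẏ‖_∞)^{β₀}‖X‖_α² + ‖R^Y‖_{2α}`. -/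
theorem stmt_15 {V : Type*} [NormedAddCommGroup V] [NormedSpace ℝ V]
    (T α β₀ β₁ : ℝ) (hT : 0 < T) (hα1 : 1 / 3 < α) (hα2 : α ≤ 1 / 2)
    (hβ₀ : 0 ≤ β₀) (hβ₁ : 0 ≤ β₁)
    (X : ℝ → V) (CX : ℝ) (hCX : 0 ≤ CX)
    (hX : ∀ s ∈ Icc (0 : ℝ) T, ∀ t ∈ Icc (0 : ℝ) T, ‖X t - X s‖ ≤ CX * |t - s| ^ α)
    (F : V → V → V)
    (hsm : ContDiff ℝ 4 (fun p : V × V => F p.1 p.2))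
    (Nf : ℝ)
    (hf0 : ∀ j ≤ 3, ∀ u ∈ closure (convexHull ℝ (X '' Icc (0 : ℝ) T)), ∀ x : V,
      ‖iteratedFDeriv ℝ j (fun u' : V => F u' x) u‖ ≤ Nf * (1 + ‖x‖) ^ β₀)
    (hf1 : ∀ j ≤ 3, ∀ u ∈ closure (convexHull ℝ (X '' Icc (0 : ℝ) T)), ∀ x : V,
      ‖iteratedFDeriv ℝ j (fun u' : V => fderiv ℝ (fun y => F u' y) x) u‖
        ≤ Nf * (1 + ‖x‖) ^ β₁)
    (Y Yd : ℝ → V) (MYd CY CYd CR : ℝ)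
    (hMYd : ∀ t ∈ Icc (0 : ℝ) T, ‖Yd t‖ ≤ MYd)
    (hCY : ∀ s ∈ Icc (0 : ℝ) T, ∀ t ∈ Icc (0 : ℝ) T, ‖Y t - Y s‖ ≤ CY * |t - s| ^ α)
    (hCYd : ∀ s ∈ Icc (0 : ℝ) T, ∀ t ∈ Icc (0 : ℝ) T, ‖Yd t - Yd s‖ ≤ CYd * |t - s| ^ α)
    (hCR : ∀ s ∈ Icc (0 : ℝ) T, ∀ t ∈ Icc (0 : ℝ) T,
      ‖Y t - Y s - (F (X t) (Yd s) - F (X s) (Yd s))‖ ≤ CR * |t - s| ^ (2 * α)) :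
    (∃ C : ℝ, ∀ s ∈ Icc (0 : ℝ) T, ∀ t ∈ Icc (0 : ℝ) T,
      ‖fderiv ℝ (fun u : V => F u (Yd t)) (X t) - fderiv ℝ (fun u : V => F u (Yd s)) (X s)‖
        ≤ C * |t - s| ^ α) ∧
    (∀ s ∈ Icc (0 : ℝ) T, ∀ t ∈ Icc (0 : ℝ) T,
      ‖Y t - Y s - fderiv ℝ (fun u : V => F u (Yd s)) (X s) (X t - X s)‖
        ≤ ((1 / 2) * Nf * (1 + MYd) ^ β₀ * CX ^ 2 + CR) * |t - s| ^ (2 * α)) :=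
  stmt_15_general T α β₀ β₁ hβ₀ hβ₁ X CX hX F hsm Nf hf0 hf1 Y Yd MYd CYd CR hMYd hCYd hCR
end
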